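/- arXiv:2210.04712 — 5 statements merged into one kernel-verified Lean document; each statement's English description precedes it below -/
import Mathlib

section
/- Let k ≥ 1 and let G be a graph on n vertices containing exactly k triangles, such that no single vertex of G is contained in every triangle of G. Let X be the set of vertices of G contained in at least one triangle and set x = |X|. Then x ≤ 3k, the number f of edges of G incident to at least one vertex outside X satisfies 4f ≤ (n−2)², and consequently the total number of edges of G is at most (n−2)²/4 + x(x−1)/2. -/
open SimpleGraph

/-- The number of copies of `F` in `G`, i.e. the number of subgraphs of `G`
isomorphic to `F`. -/
noncomputable def copyCount {V W : Type*} (G : SimpleGraph V) (F : SimpleGraph W) : ℕ :=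
  Set.ncard {H : G.Subgraph | Nonempty (H.coe ≃g F)}

/-- The number of edges of a graph. -/
noncomputable def edgeCount {V : Type*} (G : SimpleGraph V) : ℕ := G.edgeSet.ncard

/-- The set of vertices of `G` contained in at least one triangle of `G`. -/
def triangleVerts {V : Type*} (G : SimpleGraph V) : Set V :=
  {v | ∃ H : G.Subgraph, Nonempty (H.coe ≃g (⊤ : SimpleGraph (Fin 3))) ∧ v ∈ H.verts}

section Aux
variable {V : Type*} {G : SimpleGraph V} {a b c : V}

def triSub (G : SimpleGraph V) (a b c : V) : G.Subgraph where
  verts := {a, b, c}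
  Adj u v := G.Adj u v ∧ u ∈ ({a, b, c} : Set V) ∧ v ∈ ({a, b, c} : Set V)
  adj_sub h := h.1
  edge_vert h := h.2.1
  symm := ⟨fun u v h => ⟨h.1.symm, h.2.2, h.2.1⟩⟩

lemma triSub_iso (hab : G.Adj a b) (hac : G.Adj a c) (hbc : G.Adj b c) :
    Nonempty ((triSub G a b c).coe ≃g (⊤ : SimpleGraph (Fin 3))) := by
  classical
  have h1 : a ≠ b := hab.ne
  have h2 : a ≠ c := hac.ne
  have h3 : b ≠ c := hbc.ne
  have hcard : Fintype.card ↥({a, b, c} : Set V) = 3 := by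
    rw [← Set.toFinset_card]
    rw [Set.toFinset_insert, Set.toFinset_insert, Set.toFinset_singleton]
    rw [Finset.card_insert_of_notMem (by simp [h1, h2]),
      Finset.card_insert_of_notMem (by simp [h3]), Finset.card_singleton]
  let e0 : ↥({a, b, c} : Set V) ≃ Fin 3 := Fintype.equivFinOfCardEq hcard
  have key : ∀ x y : ↥({a,b,c} : Set V), (triSub G a b c).coe.Adj x y ↔ x ≠ y := by
    rintro ⟨x, hx⟩ ⟨y, hy⟩
    change (G.Adj x y ∧ x ∈ ({a, b, c} : Set V) ∧ y ∈ ({a, b, c} : Set V)) ↔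
      (⟨x, hx⟩ : ↥({a, b, c} : Set V)) ≠ ⟨y, hy⟩
    constructor
    · intro h hxy
      exact h.1.ne (congrArg Subtype.val hxy)
    · intro hne
      have hxy : x ≠ y := fun h => hne (Subtype.ext h)
      refine ⟨?_, hx, hy⟩
      simp only [Set.mem_insert_iff, Set.mem_singleton_iff] at hx hy
      rcases hx with rfl | rfl | rfl <;> rcases hy with rfl | rfl | rfl <;>
        first
          | exact absurd rfl hxy
          | exact hab | exact hab.symm | exact hac | exact hac.symm
          | exact hbc | exact hbc.symm
  exact ⟨⟨e0, by
    intro x y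
    simp only [top_adj, ne_eq, EmbeddingLike.apply_eq_iff_eq]
    exact ⟨fun h => (key x y).mpr (fun hxy => h (congrArg e0 hxy)),
      fun h hh => (key x y).mp h (e0.injective hh)⟩⟩⟩

lemma subgraph_triangle (H : G.Subgraph) (h : Nonempty (H.coe ≃g (⊤ : SimpleGraph (Fin 3)))) :
    ∃ a b c : V, H.verts = {↑a, ↑b, ↑c} ∧ G.Adj a b ∧ G.Adj a c ∧ G.Adj b c := by
  obtain ⟨e⟩ := h
  set f : Fin 3 → ↥H.verts := fun i => e.symm i with hf
  have hadj : ∀ i j : Fin 3, i ≠ j → G.Adj (f i) (f j) := by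
    intro i j hij
    have h1 : H.coe.Adj (f i) (f j) := by
      have := e.symm.map_rel_iff (a := i) (b := j)
      exact this.mpr (by simpa using hij)
    exact h1.adj_sub
  refine ⟨(f 0 : ↥H.verts), f 1, f 2, ?_, hadj 0 1 (by decide), hadj 0 2 (by decide),
    hadj 1 2 (by decide)⟩
  ext v
  simp only [Set.mem_insert_iff, Set.mem_singleton_iff]
  constructor
  · intro hv
    have h30 : ∀ i : Fin 3, i = 0 ∨ i = 1 ∨ i = 2 := by decide
    have hvv : (⟨v, hv⟩ : ↥H.verts) = f (e ⟨v, hv⟩) := (e.symm_apply_apply _).symm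
    rcases h30 (e ⟨v, hv⟩) with h | h | h <;> rw [h] at hvv
    · exact Or.inl (congrArg Subtype.val hvv)
    · exact Or.inr (Or.inl (congrArg Subtype.val hvv))
    · exact Or.inr (Or.inr (congrArg Subtype.val hvv))
  · rintro (rfl | rfl | rfl) <;> exact Subtype.coe_prop _

lemma mem_triangleVerts_iff {v : V} :
    v ∈ triangleVerts G ↔ ∃ a b : V, G.Adj v a ∧ G.Adj v b ∧ G.Adj a b := by
  constructor
  · rintro ⟨H, hiso, hv⟩
    obtain ⟨a, b, c, hverts, hab, hac, hbc⟩ := subgraph_triangle H hiso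
    rw [hverts] at hv
    simp only [Set.mem_insert_iff, Set.mem_singleton_iff] at hv
    rcases hv with rfl | rfl | rfl
    · exact ⟨b, c, hab, hac, hbc⟩
    · exact ⟨a, c, hab.symm, hbc, hac⟩
    · exact ⟨a, b, hac.symm, hbc.symm, hab⟩
  · rintro ⟨a, b, h1, h2, h3⟩
    exact ⟨triSub G v a b, triSub_iso h1 h2 h3, Set.mem_insert _ _⟩

lemma amgm (y t : ℕ) : 4 * (y * t) ≤ (y + t) ^ 2 := by
  rcases le_total y t with h | h
  · obtain ⟨d, rfl⟩ := Nat.exists_eq_add_of_le h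
    have h2 : (y + (y + d)) ^ 2 = 4 * (y * (y + d)) + d ^ 2 := by ring
    rw [h2]
    exact Nat.le_add_right _ _
  · obtain ⟨d, rfl⟩ := Nat.exists_eq_add_of_le h
    have h2 : (t + d + t) ^ 2 = 4 * ((t + d) * t) + d ^ 2 := by ring
    rw [h2]
    exact Nat.le_add_right _ _

lemma core {V : Type*} [Fintype V] [DecidableEq V] (G : SimpleGraph V) [DecidableRel G.Adj]
    (t : ℕ) (s : V → ℕ) :
    ∀ N : ℕ, ∀ Y : Finset V, Y.card ≤ N →
      (∀ v ∈ Y, ∀ u w : V, G.Adj v u → G.Adj v w → ¬ G.Adj u w) →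
      (∀ v ∈ Y, s v ≤ t) →
      (∀ v ∈ Y, ∀ w ∈ Y, G.Adj v w → s v + s w ≤ t) →
      2 * (∑ v ∈ Y, (Y.filter (fun u => G.Adj v u)).card) + 4 * (∑ v ∈ Y, s v)
        ≤ (Y.card + t) ^ 2 := by
  intro N
  induction N with
  | zero =>
    intro Y hY _ _ _
    have : Y = ∅ := Finset.card_eq_zero.mp (Nat.le_zero.mp hY)
    subst this
    simp
  | succ N ih =>
    intro Y hY h1 h2 h3
    by_cases hedge : ∃ v ∈ Y, ∃ w ∈ Y, G.Adj v w
    · obtain ⟨v, hv, w, hw, hvw⟩ := hedge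
      have hvw' : v ≠ w := hvw.ne
      set Y' := (Y.erase v).erase w with hY'
      have hwv : w ∈ Y.erase v := Finset.mem_erase.mpr ⟨hvw'.symm, hw⟩
      have hsub : Y' ⊆ Y := (Finset.erase_subset _ _).trans (Finset.erase_subset _ _)
      have hcard2 : 2 ≤ Y.card := by
        have : ({v, w} : Finset V) ⊆ Y := by
          intro u hu; simp only [Finset.mem_insert, Finset.mem_singleton] at hu
          rcases hu with rfl | rfl <;> assumption
        have h5 := Finset.card_le_card this
        rwa [Finset.card_insert_of_notMem (by simp [hvw']), Finset.card_singleton] at h5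
      have hY'card : Y'.card + 2 = Y.card := by
        rw [hY', Finset.card_erase_of_mem hwv, Finset.card_erase_of_mem hv]
        omega
      have hvY' : v ∉ Y' := by simp [hY']
      have hwY' : w ∉ Y' := by simp [hY']
      have hYeq : Y = insert v (insert w Y') := by
        ext u
        simp only [Finset.mem_insert, hY', Finset.mem_erase]
        constructor
        · intro hu
          by_cases h5 : u = v
          · exact Or.inl h5
          · by_cases h6 : u = w
            · exact Or.inr (Or.inl h6)
            · exact Or.inr (Or.inr ⟨h6, h5, hu⟩)
        · rintro (rfl | rfl | ⟨_, _, hu⟩) <;> assumption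
      have hIH := ih Y' (by omega) (fun a ha => h1 a (hsub ha))
        (fun a ha => h2 a (hsub ha)) (fun a ha b hb => h3 a (hsub ha) b (hsub hb))
      -- sum of s
      have hvins : v ∉ insert w Y' := by simp [hvw', hvY']
      have hsums : ∑ a ∈ Y, s a = s v + s w + ∑ a ∈ Y', s a := by
        rw [hYeq, Finset.sum_insert hvins, Finset.sum_insert hwY']; ring
      -- degree sums
      have hdisj : Disjoint (Y.filter (fun u => G.Adj v u)) (Y.filter (fun u => G.Adj w u)) := by
        rw [Finset.disjoint_left]
        intro u hu1 hu2
        exact h1 v hv u w (Finset.mem_filter.mp hu1).2 hvw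
          ((Finset.mem_filter.mp hu2).2.symm)
      have hdvw : (Y.filter (fun u => G.Adj v u)).card + (Y.filter (fun u => G.Adj w u)).card
          ≤ Y.card := by
        rw [← Finset.card_union_of_disjoint hdisj]
        exact Finset.card_le_card (Finset.union_subset (Finset.filter_subset _ _)
          (Finset.filter_subset _ _))
      have hdisj2 : Disjoint (Y'.filter (fun a => G.Adj a v)) (Y'.filter (fun a => G.Adj a w)) := by
        rw [Finset.disjoint_left]
        intro u hu1 hu2
        exact h1 v hv u w ((Finset.mem_filter.mp hu1).2.symm) hvw (Finset.mem_filter.mp hu2).2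
      have hdY'vw : (Y'.filter (fun a => G.Adj a v)).card + (Y'.filter (fun a => G.Adj a w)).card
          ≤ Y'.card := by
        rw [← Finset.card_union_of_disjoint hdisj2]
        exact Finset.card_le_card (Finset.union_subset (Finset.filter_subset _ _)
          (Finset.filter_subset _ _))
      have hstep : ∀ a ∈ Y', (Y.filter (fun u => G.Adj a u)).card ≤
          (Y'.filter (fun u => G.Adj a u)).card
            + ((if G.Adj a v then 1 else 0) + (if G.Adj a w then 1 else 0)) := by
        intro a _
        rw [hYeq, Finset.filter_insert, Finset.filter_insert]
        split_ifs
        · have c1 := Finset.card_insert_le v (insert w (Y'.filter (fun u => G.Adj a u)))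
          have c2 := Finset.card_insert_le w (Y'.filter (fun u => G.Adj a u))
          omega
        · have c1 := Finset.card_insert_le v (Y'.filter (fun u => G.Adj a u))
          omega
        · have c2 := Finset.card_insert_le w (Y'.filter (fun u => G.Adj a u))
          omega
        · omega
      have hsumd : ∑ a ∈ Y, (Y.filter (fun u => G.Adj a u)).card ≤
          (∑ a ∈ Y', (Y'.filter (fun u => G.Adj a u)).card) + (2 * Y.card - 2) := by
        rw [hYeq, Finset.sum_insert hvins, Finset.sum_insert hwY']
        rw [← hYeq]
        have hb : ∑ a ∈ Y', (Y.filter (fun u => G.Adj a u)).card ≤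
            (∑ a ∈ Y', (Y'.filter (fun u => G.Adj a u)).card)
              + ((Y'.filter (fun a => G.Adj a v)).card + (Y'.filter (fun a => G.Adj a w)).card) := by
          calc ∑ a ∈ Y', (Y.filter (fun u => G.Adj a u)).card
              ≤ ∑ a ∈ Y', ((Y'.filter (fun u => G.Adj a u)).card
                + ((if G.Adj a v then 1 else 0) + (if G.Adj a w then 1 else 0))) :=
                Finset.sum_le_sum hstep
            _ = (∑ a ∈ Y', (Y'.filter (fun u => G.Adj a u)).card)
                + ((∑ a ∈ Y', if G.Adj a v then 1 else 0)
                  + (∑ a ∈ Y', if G.Adj a w then 1 else 0)) := by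
                rw [Finset.sum_add_distrib, Finset.sum_add_distrib]
            _ = _ := by rw [← Finset.card_filter, ← Finset.card_filter]
        omega
      -- finish
      have hsvw : s v + s w ≤ t := h3 v hv w hw hvw
      have hexp : (Y.card + t) ^ 2 = (Y'.card + t) ^ 2 + (4 * (Y'.card + t) + 4) := by
        rw [← hY'card]; ring
      set A := ∑ a ∈ Y', (Y'.filter (fun u => G.Adj a u)).card with hA
      set B := ∑ a ∈ Y', s a with hB
      set Q := (Y'.card + t) ^ 2 with hQ
      rw [hexp, hsums]
      have hIH' : 2 * A + 4 * B ≤ Q := hIH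
      have hsd : ∑ a ∈ Y, (Y.filter (fun u => G.Adj a u)).card ≤ A + (2 * Y.card - 2) := hsumd
      set D := ∑ a ∈ Y, (Y.filter (fun u => G.Adj a u)).card with hD
      omega
    · push_neg at hedge
      have hzero : ∀ v ∈ Y, (Y.filter (fun u => G.Adj v u)).card = 0 := by
        intro v hv
        rw [Finset.card_eq_zero, Finset.filter_eq_empty_iff]
        intro u hu
        exact hedge v hv u hu
      have hs1 : ∑ v ∈ Y, (Y.filter (fun u => G.Adj v u)).card = 0 :=
        Finset.sum_eq_zero hzero
      have hs2 : ∑ v ∈ Y, s v ≤ Y.card * t := by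
        calc ∑ v ∈ Y, s v ≤ ∑ _v ∈ Y, t := Finset.sum_le_sum h2
          _ = Y.card * t := by rw [Finset.sum_const, smul_eq_mul]
      calc 2 * (∑ v ∈ Y, (Y.filter (fun u => G.Adj v u)).card) + 4 * (∑ v ∈ Y, s v)
          = 4 * ∑ v ∈ Y, s v := by rw [hs1]; ring
        _ ≤ 4 * (Y.card * t) := by omega
        _ ≤ (Y.card + t) ^ 2 := amgm _ _

end Aux

section Graphs
variable {V : Type*} (G : SimpleGraph V) (P : Set V)

def sideGraph : SimpleGraph V where
  Adj u v := G.Adj u v ∧ (u ∉ P ∨ v ∉ P)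
  symm := ⟨fun u v h => ⟨h.1.symm, h.2.symm⟩⟩
  loopless := ⟨fun u h => G.loopless.irrefl u h.1⟩

@[simp] lemma sideGraph_adj (u v : V) :
    (sideGraph G P).Adj u v ↔ G.Adj u v ∧ (u ∉ P ∨ v ∉ P) := Iff.rfl

def innerGraph : SimpleGraph V where
  Adj u v := G.Adj u v ∧ u ∈ P ∧ v ∈ P
  symm := ⟨fun u v h => ⟨h.1.symm, h.2.2, h.2.1⟩⟩
  loopless := ⟨fun u h => G.loopless.irrefl u h.1⟩

@[simp] lemma innerGraph_adj (u v : V) :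
    (innerGraph G P).Adj u v ↔ G.Adj u v ∧ u ∈ P ∧ v ∈ P := Iff.rfl

end Graphs


/-- let `k ≥ 1` and let `G` be a graph on `n` vertices with exactly `k`
triangles such that no single vertex lies in every triangle of `G`. Let `X` be the set of
vertices lying in at least one triangle and `x = |X|`. Then `x ≤ 3k`, the number `f` of
edges of `G` incident to at least one vertex outside `X` satisfies `4f ≤ (n−2)²`, and the
total number of edges of `G` is at most `(n−2)²/4 + x(x−1)/2`. -/
theorem stmt12 (n k : ℕ) (hk : 1 ≤ k) (G : SimpleGraph (Fin n))
    (hG : _root_.copyCount G (⊤ : SimpleGraph (Fin 3)) = k)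
    (hno : ¬ ∃ v : Fin n, ∀ H : G.Subgraph,
      Nonempty (H.coe ≃g (⊤ : SimpleGraph (Fin 3))) → v ∈ H.verts) :
    (triangleVerts G).ncard ≤ 3 * k ∧
    4 * ({e ∈ G.edgeSet | ∃ v ∈ e, v ∉ triangleVerts G}.ncard : ℝ) ≤ ((n : ℝ) - 2) ^ 2 ∧
    (edgeCount G : ℝ) ≤ ((n : ℝ) - 2) ^ 2 / 4 +
      ((triangleVerts G).ncard : ℝ) * (((triangleVerts G).ncard : ℝ) - 1) / 2 := by
  classical
  set TV := triangleVerts G with hTVdef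
  push_neg at hno
  have memTV : ∀ v : Fin n, v ∈ TV ↔ ∃ a b : Fin n, G.Adj v a ∧ G.Adj v b ∧ G.Adj a b :=
    fun v => mem_triangleVerts_iff
  -- finiteness of the family of triangles
  have hTfin : {H : G.Subgraph | Nonempty (H.coe ≃g (⊤ : SimpleGraph (Fin 3)))}.Finite := by
    by_contra hcon
    rw [_root_.copyCount, Set.Infinite.ncard hcon] at hG
    omega
  have hTcard : hTfin.toFinset.card = k := by
    rw [← Set.ncard_eq_toFinset_card _ hTfin]
    exact hG
  -- Part 1
  have hvcard : ∀ H : G.Subgraph, Nonempty (H.coe ≃g (⊤ : SimpleGraph (Fin 3))) →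
      H.verts.ncard = 3 := by
    rintro H ⟨e⟩
    rw [← Nat.card_coe_set_eq, Nat.card_congr e.toEquiv]
    simp
  have hTVeq : TV = ↑(hTfin.toFinset.biUnion (fun H => (Set.toFinite H.verts).toFinset)) := by
    ext v
    simp only [Finset.coe_biUnion, Set.mem_iUnion, Finset.mem_coe,
      Set.Finite.mem_toFinset, Set.mem_setOf_eq, hTVdef, triangleVerts]
    constructor
    · rintro ⟨H, h1, h2⟩; exact ⟨H, h1, h2⟩
    · rintro ⟨H, h1, h2⟩; exact ⟨H, h1, h2⟩
  have part1 : TV.ncard ≤ 3 * k := by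
    rw [hTVeq, Set.ncard_coe_finset]
    calc (hTfin.toFinset.biUnion (fun H => (Set.toFinite H.verts).toFinset)).card
        ≤ ∑ H ∈ hTfin.toFinset, (Set.toFinite H.verts).toFinset.card :=
          Finset.card_biUnion_le
      _ = ∑ H ∈ hTfin.toFinset, 3 := by
          refine Finset.sum_congr rfl fun H hH => ?_
          rw [← Set.ncard_eq_toFinset_card _ (Set.toFinite H.verts)]
          exact hvcard H (hTfin.mem_toFinset.mp hH)
      _ = 3 * k := by rw [Finset.sum_const, smul_eq_mul, hTcard]; ring
  -- set up X and Y
  set Xf : Finset (Fin n) := Finset.univ.filter (fun v => v ∈ TV) with hXfdef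
  set Yf : Finset (Fin n) := Finset.univ.filter (fun v => v ∉ TV) with hYfdef
  have hXmem : ∀ v : Fin n, v ∈ Xf ↔ v ∈ TV := by intro v; simp [hXfdef]
  have hYmem : ∀ v : Fin n, v ∈ Yf ↔ v ∉ TV := by intro v; simp [hYfdef]
  have hXcoe : (↑Xf : Set (Fin n)) = TV := by ext v; simp [hXmem]
  have hTVncard : TV.ncard = Xf.card := by rw [← hXcoe, Set.ncard_coe_finset]
  have hxyn : Xf.card + Yf.card = n := by
    have := Finset.card_filter_add_card_filter_not
      (s := (Finset.univ : Finset (Fin n))) (p := fun v => v ∈ TV)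
    simpa [hXfdef, hYfdef] using this
  have hY1 : ∀ v ∈ Yf, ∀ u w : Fin n, G.Adj v u → G.Adj v w → ¬ G.Adj u w := by
    intro v hv u w h1 h2 h3
    exact (hYmem v).mp hv ((memTV v).mpr ⟨u, w, h1, h2, h3⟩)
  -- triangles avoiding any given vertex
  have htri : ∀ z : Fin n, ∃ a b c : Fin n, G.Adj a b ∧ G.Adj a c ∧ G.Adj b c ∧
      z ≠ a ∧ z ≠ b ∧ z ≠ c ∧ a ∈ Xf ∧ b ∈ Xf ∧ c ∈ Xf := by
    intro z
    obtain ⟨H, hiso, hz⟩ := hno z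
    obtain ⟨a, b, c, hverts, hab, hac, hbc⟩ := subgraph_triangle H hiso
    have hmema : a ∈ Xf := (hXmem a).mpr ((memTV a).mpr ⟨b, c, hab, hac, hbc⟩)
    have hmemb : b ∈ Xf := (hXmem b).mpr ((memTV b).mpr ⟨a, c, hab.symm, hbc, hac⟩)
    have hmemc : c ∈ Xf := (hXmem c).mpr ((memTV c).mpr ⟨a, b, hac.symm, hbc.symm, hab⟩)
    refine ⟨a, b, c, hab, hac, hbc, ?_, ?_, ?_, hmema, hmemb, hmemc⟩
    · rintro rfl; exact hz (hverts ▸ Set.mem_insert _ _)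
    · rintro rfl; refine hz (hverts ▸ ?_); right; left; rfl
    · rintro rfl; refine hz (hverts ▸ ?_); right; right; rfl
  -- x ≥ 3
  have hx3 : 3 ≤ Xf.card := by
    obtain ⟨H0, h0⟩ : ∃ H : G.Subgraph, Nonempty (H.coe ≃g (⊤ : SimpleGraph (Fin 3))) := by
      have hne : {H : G.Subgraph | Nonempty (H.coe ≃g (⊤ : SimpleGraph (Fin 3)))}.Nonempty := by
        rw [← Set.ncard_pos hTfin]
        rw [_root_.copyCount] at hG; omega
      exact hne
    obtain ⟨a, b, c, hverts, hab, hac, hbc⟩ := subgraph_triangle H0 h0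
    have hmema : a ∈ Xf := (hXmem a).mpr ((memTV a).mpr ⟨b, c, hab, hac, hbc⟩)
    have hmemb : b ∈ Xf := (hXmem b).mpr ((memTV b).mpr ⟨a, c, hab.symm, hbc, hac⟩)
    have hmemc : c ∈ Xf := (hXmem c).mpr ((memTV c).mpr ⟨a, b, hac.symm, hbc.symm, hab⟩)
    have hsub : ({a, b, c} : Finset (Fin n)) ⊆ Xf := by
      intro u hu
      simp only [Finset.mem_insert, Finset.mem_singleton] at hu
      rcases hu with rfl | rfl | rfl <;> assumption
    have h5 := Finset.card_le_card hsub
    rwa [Finset.card_insert_of_notMem (by simp [hab.ne, hac.ne]),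
      Finset.card_insert_of_notMem (by simp [hbc.ne]), Finset.card_singleton] at h5
  have hxn : Xf.card ≤ n := by
    have := Finset.card_le_univ Xf
    simpa using this
  set t : ℕ := Xf.card - 2 with htdef
  set s : Fin n → ℕ := fun v => (Xf.filter (fun u => G.Adj v u)).card with hsdef
  -- hypothesis h2 of core
  have hcore2 : ∀ v ∈ Yf, s v ≤ t := by
    intro v hv
    by_cases hemp : Xf.filter (fun u => G.Adj v u) = ∅
    · have hs0 : s v = 0 := by rw [hsdef]; simp [hemp]
      omega
    · obtain ⟨a, ha⟩ := Finset.nonempty_iff_ne_empty.mpr hemp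
      rw [Finset.mem_filter] at ha
      obtain ⟨haX, hva⟩ := ha
      obtain ⟨p, q, hap, haq, hpq⟩ := (memTV a).mp ((hXmem a).mp haX)
      have hpX : p ∈ Xf := (hXmem p).mpr ((memTV p).mpr ⟨a, q, hap.symm, hpq, haq⟩)
      have hqX : q ∈ Xf := (hXmem q).mpr ((memTV q).mpr ⟨a, p, haq.symm, hpq.symm, hap⟩)
      have hsub : Xf.filter (fun u => G.Adj v u) ⊆ (Xf.erase p).erase q := by
        intro u hu
        rw [Finset.mem_filter] at hu
        refine Finset.mem_erase.mpr ⟨?_, Finset.mem_erase.mpr ⟨?_, hu.1⟩⟩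
        · rintro rfl; exact hY1 v hv a u hva hu.2 haq
        · rintro rfl; exact hY1 v hv a u hva hu.2 hap
      have h5 := Finset.card_le_card hsub
      rw [Finset.card_erase_of_mem (Finset.mem_erase.mpr ⟨hpq.ne', hqX⟩),
        Finset.card_erase_of_mem hpX] at h5
      have hsv : s v = (Xf.filter (fun u => G.Adj v u)).card := by rw [hsdef]
      omega
  -- hypothesis h3 of core
  have hcore3 : ∀ v ∈ Yf, ∀ w ∈ Yf, G.Adj v w → s v + s w ≤ t := by
    intro v hv w hw hvw
    have hdisj : Disjoint (Xf.filter (fun u => G.Adj v u)) (Xf.filter (fun u => G.Adj w u)) := by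
      rw [Finset.disjoint_left]
      intro u hu1 hu2
      exact hY1 v hv u w (Finset.mem_filter.mp hu1).2 hvw ((Finset.mem_filter.mp hu2).2.symm)
    set U := Xf.filter (fun u => G.Adj v u) ∪ Xf.filter (fun u => G.Adj w u) with hUdef
    have hcardU : s v + s w = U.card := (Finset.card_union_of_disjoint hdisj).symm
    have hUX : U ⊆ Xf := Finset.union_subset (Finset.filter_subset _ _) (Finset.filter_subset _ _)
    have hmemU : ∀ u, u ∈ U → G.Adj v u ∨ G.Adj w u := by
      intro u hu
      rcases Finset.mem_union.mp hu with h | h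
      · exact Or.inl (Finset.mem_filter.mp h).2
      · exact Or.inr (Finset.mem_filter.mp h).2
    have hnotall : ∀ a b c : Fin n, G.Adj a b → G.Adj a c → G.Adj b c →
        a ∉ U ∨ b ∉ U ∨ c ∉ U := by
      intro a b c hab hac hbc
      by_contra hcon
      push_neg at hcon
      obtain ⟨haU, hbU, hcU⟩ := hcon
      rcases hmemU a haU with ha | ha <;> rcases hmemU b hbU with hb | hb <;>
        rcases hmemU c hcU with hc | hc <;>
        first
          | exact hY1 v hv a b ha hb hab
          | exact hY1 v hv a c ha hc hac
          | exact hY1 v hv b c hb hc hbc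
          | exact hY1 w hw a b ha hb hab
          | exact hY1 w hw a c ha hc hac
          | exact hY1 w hw b c hb hc hbc
    obtain ⟨a, b, c, hab, hac, hbc, _, _, _, haX, hbX, hcX⟩ := htri v
    have hfirst : ∃ c0 : Fin n, c0 ∈ Xf ∧ c0 ∉ U := by
      rcases hnotall a b c hab hac hbc with h | h | h
      · exact ⟨a, haX, h⟩
      · exact ⟨b, hbX, h⟩
      · exact ⟨c, hcX, h⟩
    obtain ⟨c0, hc0X, hc0U⟩ := hfirst
    obtain ⟨d, e, g, hde, hdg, heg, hcd, hce, hcg, hdX, heX, hgX⟩ := htri c0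
    have hsecond : ∃ g0 : Fin n, g0 ∈ Xf ∧ g0 ∉ U ∧ g0 ≠ c0 := by
      rcases hnotall d e g hde hdg heg with h | h | h
      · exact ⟨d, hdX, h, fun hh => hcd hh.symm⟩
      · exact ⟨e, heX, h, fun hh => hce hh.symm⟩
      · exact ⟨g, hgX, h, fun hh => hcg hh.symm⟩
    obtain ⟨g0, hg0X, hg0U, hg0c0⟩ := hsecond
    have hsub : U ⊆ (Xf.erase c0).erase g0 := by
      intro u hu
      refine Finset.mem_erase.mpr ⟨?_, Finset.mem_erase.mpr ⟨?_, hUX hu⟩⟩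
      · rintro rfl; exact hg0U hu
      · rintro rfl; exact hc0U hu
    have h5 := Finset.card_le_card hsub
    rw [Finset.card_erase_of_mem (Finset.mem_erase.mpr ⟨hg0c0, hg0X⟩),
      Finset.card_erase_of_mem hc0X] at h5
    omega
  -- apply the core lemma
  have hkey := core G t s Yf.card Yf le_rfl hY1 hcore2 hcore3
  -- relate to edge counts via handshake
  set HS := sideGraph G TV with hHSdef
  have hhs : ∑ v : Fin n, HS.degree v = 2 * HS.edgeFinset.card :=
    SimpleGraph.sum_degrees_eq_twice_card_edges HS
  have hsplit : ∑ v : Fin n, HS.degree v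
      = ∑ v ∈ Xf, HS.degree v + ∑ v ∈ Yf, HS.degree v := by
    rw [← Finset.sum_filter_add_sum_filter_not Finset.univ (fun v => v ∈ TV) (fun v => HS.degree v)]
  have hdegY : ∀ v ∈ Yf, HS.degree v = (Yf.filter (fun u => G.Adj v u)).card + s v := by
    intro v hv
    have hvTV : v ∉ TV := (hYmem v).mp hv
    rw [SimpleGraph.degree, SimpleGraph.neighborFinset_eq_filter]
    have hfeq : Finset.univ.filter (fun u => HS.Adj v u)
        = Finset.univ.filter (fun u => G.Adj v u) := by
      ext u
      simp only [Finset.mem_filter, hHSdef, sideGraph_adj]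
      tauto
    rw [hfeq]
    have := Finset.card_filter_add_card_filter_not
      (s := Finset.univ.filter (fun u => G.Adj v u)) (p := fun u => u ∉ TV)
    have hA : (Finset.univ.filter (fun u => G.Adj v u)).filter (fun u => u ∉ TV)
        = Yf.filter (fun u => G.Adj v u) := by
      ext u; simp only [Finset.mem_filter, hYfdef, Finset.mem_univ, true_and]; tauto
    have hB : (Finset.univ.filter (fun u => G.Adj v u)).filter (fun u => ¬ u ∉ TV)
        = Xf.filter (fun u => G.Adj v u) := by
      ext u; simp only [Finset.mem_filter, hXfdef, Finset.mem_univ, true_and, not_not]; tauto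
    rw [hA, hB] at this
    have hsv : s v = (Xf.filter (fun u => G.Adj v u)).card := by rw [hsdef]
    omega
  have hdegX : ∀ v ∈ Xf, HS.degree v = (Yf.filter (fun u => G.Adj v u)).card := by
    intro v hv
    have hvTV : v ∈ TV := (hXmem v).mp hv
    rw [SimpleGraph.degree, SimpleGraph.neighborFinset_eq_filter]
    congr 1
    ext u
    simp only [Finset.mem_filter, hHSdef, sideGraph_adj, hYfdef, Finset.mem_univ, true_and]
    constructor
    · rintro ⟨h1, h2 | h2⟩
      · exact absurd hvTV h2
      · exact ⟨h2, h1⟩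
    · rintro ⟨h1, h2⟩; exact ⟨h2, Or.inr h1⟩
  have hswap : ∑ v ∈ Xf, (Yf.filter (fun u => G.Adj v u)).card = ∑ v ∈ Yf, s v := by
    calc ∑ v ∈ Xf, (Yf.filter (fun u => G.Adj v u)).card
        = ∑ v ∈ Xf, ∑ u ∈ Yf, if G.Adj v u then 1 else 0 := by
          refine Finset.sum_congr rfl fun v _ => ?_
          rw [Finset.card_filter]
      _ = ∑ u ∈ Yf, ∑ v ∈ Xf, if G.Adj v u then 1 else 0 := Finset.sum_comm
      _ = ∑ u ∈ Yf, s u := by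
          refine Finset.sum_congr rfl fun u _ => ?_
          have hsu : s u = ∑ v ∈ Xf, if G.Adj u v then 1 else 0 :=
            Finset.card_filter _ _
          rw [hsu]
          exact Finset.sum_congr rfl fun v _ => if_congr (G.adj_comm v u) rfl rfl
  have h2F : 2 * HS.edgeFinset.card
      = ∑ v ∈ Yf, (Yf.filter (fun u => G.Adj v u)).card + 2 * ∑ v ∈ Yf, s v := by
    rw [← hhs, hsplit]
    rw [Finset.sum_congr rfl hdegX, Finset.sum_congr rfl hdegY, hswap,
      Finset.sum_add_distrib]
    ring
  have h4F : 4 * HS.edgeFinset.card ≤ (n - 2) ^ 2 := by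
    have hyt : Yf.card + t = n - 2 := by omega
    have e1 := hkey
    have e2 := h2F
    rw [← hyt]
    generalize hq : (Yf.card + t) ^ 2 = Q at e1 ⊢
    omega
  -- identify the set in the statement
  have hFset : {e ∈ G.edgeSet | ∃ v ∈ e, v ∉ TV} = ↑HS.edgeFinset := by
    rw [coe_edgeFinset]
    ext e
    induction e using Sym2.ind with
    | _ p q =>
      simp only [Set.mem_setOf_eq, SimpleGraph.mem_edgeSet, Sym2.mem_iff, hHSdef, sideGraph_adj]
      constructor
      · rintro ⟨h1, v, hv, hv2⟩
        rcases hv with rfl | rfl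
        · exact ⟨h1, Or.inl hv2⟩
        · exact ⟨h1, Or.inr hv2⟩
      · rintro ⟨h1, h2 | h2⟩
        · exact ⟨h1, p, Or.inl rfl, h2⟩
        · exact ⟨h1, q, Or.inr rfl, h2⟩
  have hFcard : {e ∈ G.edgeSet | ∃ v ∈ e, v ∉ TV}.ncard = HS.edgeFinset.card := by
    rw [hFset, Set.ncard_coe_finset]
  -- inner graph counting
  set IS := innerGraph G TV with hISdef
  have his : ∑ v : Fin n, IS.degree v = 2 * IS.edgeFinset.card :=
    SimpleGraph.sum_degrees_eq_twice_card_edges IS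
  have hdegY0 : ∀ v ∈ Yf, IS.degree v = 0 := by
    intro v hv
    have hvTV : v ∉ TV := (hYmem v).mp hv
    rw [SimpleGraph.degree, SimpleGraph.neighborFinset_eq_filter, Finset.card_eq_zero,
      Finset.filter_eq_empty_iff]
    intro u _
    rw [hISdef, innerGraph_adj]
    tauto
  have hdegXI : ∀ v ∈ Xf, IS.degree v ≤ Xf.card - 1 := by
    intro v hv
    have hvTV : v ∈ TV := (hXmem v).mp hv
    rw [SimpleGraph.degree, SimpleGraph.neighborFinset_eq_filter]
    have hsub : Finset.univ.filter (fun u => IS.Adj v u) ⊆ Xf.erase v := by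
      intro u hu
      rw [Finset.mem_filter, hISdef, innerGraph_adj] at hu
      refine Finset.mem_erase.mpr ⟨?_, (hXmem u).mpr hu.2.2.2⟩
      rintro rfl
      exact G.loopless.irrefl _ hu.2.1
    have h5 := Finset.card_le_card hsub
    rwa [Finset.card_erase_of_mem hv] at h5
  have h2I : 2 * IS.edgeFinset.card ≤ Xf.card * (Xf.card - 1) := by
    rw [← his]
    rw [← Finset.sum_filter_add_sum_filter_not Finset.univ (fun v => v ∈ TV)
      (fun v => IS.degree v)]
    have hz : ∑ v ∈ Yf, IS.degree v = 0 := Finset.sum_eq_zero hdegY0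
    calc ∑ v ∈ Xf, IS.degree v + ∑ v ∈ Yf, IS.degree v
        = ∑ v ∈ Xf, IS.degree v := by rw [hz, add_zero]
      _ ≤ ∑ _v ∈ Xf, (Xf.card - 1) := Finset.sum_le_sum hdegXI
      _ = Xf.card * (Xf.card - 1) := by rw [Finset.sum_const, smul_eq_mul]
  -- edge count split
  have hIset : G.edgeFinset.filter (fun e => ¬ ∃ v ∈ e, v ∉ TV) = IS.edgeFinset := by
    ext e
    induction e using Sym2.ind with
    | _ p q =>
      simp only [Finset.mem_filter, SimpleGraph.mem_edgeFinset, SimpleGraph.mem_edgeSet,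
        Sym2.mem_iff, hISdef, innerGraph_adj]
      constructor
      · rintro ⟨h1, h2⟩
        push_neg at h2
        exact ⟨h1, h2 p (Or.inl rfl), h2 q (Or.inr rfl)⟩
      · rintro ⟨h1, h2, h3⟩
        refine ⟨h1, ?_⟩
        push_neg
        rintro v (rfl | rfl) <;> assumption
  have hFset2 : G.edgeFinset.filter (fun e => ∃ v ∈ e, v ∉ TV) = HS.edgeFinset := by
    ext e
    induction e using Sym2.ind with
    | _ p q =>
      simp only [Finset.mem_filter, SimpleGraph.mem_edgeFinset, SimpleGraph.mem_edgeSet,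
        Sym2.mem_iff, hHSdef, sideGraph_adj]
      constructor
      · rintro ⟨h1, v, hv, hv2⟩
        rcases hv with rfl | rfl
        · exact ⟨h1, Or.inl hv2⟩
        · exact ⟨h1, Or.inr hv2⟩
      · rintro ⟨h1, h2 | h2⟩
        · exact ⟨h1, p, Or.inl rfl, h2⟩
        · exact ⟨h1, q, Or.inr rfl, h2⟩
  have hEsplit : HS.edgeFinset.card + IS.edgeFinset.card = G.edgeFinset.card := by
    rw [← hFset2, ← hIset]
    exact Finset.card_filter_add_card_filter_not _
  have hEC : edgeCount G = G.edgeFinset.card := by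
    rw [edgeCount, ← coe_edgeFinset, Set.ncard_coe_finset]
  -- final numeric assembly
  have hn3 : 3 ≤ n := le_trans hx3 hxn
  have hcast : ((n - 2 : ℕ) : ℝ) = (n : ℝ) - 2 := by
    rw [Nat.cast_sub (by omega)]
    norm_num
  refine ⟨part1, ?_, ?_⟩
  · rw [hFcard]
    calc (4 : ℝ) * HS.edgeFinset.card = ((4 * HS.edgeFinset.card : ℕ) : ℝ) := by push_cast; ring
      _ ≤ (((n - 2) ^ 2 : ℕ) : ℝ) := by exact_mod_cast h4F
      _ = ((n : ℝ) - 2) ^ 2 := by push_cast [hcast]; ring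
  · have hf1 : (HS.edgeFinset.card : ℝ) ≤ ((n : ℝ) - 2) ^ 2 / 4 := by
      have h1 : ((4 * HS.edgeFinset.card : ℕ) : ℝ) ≤ (((n - 2) ^ 2 : ℕ) : ℝ) := by
        exact_mod_cast h4F
      push_cast [hcast] at h1
      linarith
    have hf2 : (IS.edgeFinset.card : ℝ) ≤ (Xf.card : ℝ) * ((Xf.card : ℝ) - 1) / 2 := by
      have h1 : ((2 * IS.edgeFinset.card : ℕ) : ℝ) ≤ ((Xf.card * (Xf.card - 1) : ℕ) : ℝ) := by
        exact_mod_cast h2I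
      have hxc : ((Xf.card - 1 : ℕ) : ℝ) = (Xf.card : ℝ) - 1 := by
        rw [Nat.cast_sub (by omega)]
        norm_num
      push_cast [hxc] at h1
      linarith
    rw [hEC, ← hEsplit, hTVncard]
    push_cast
    linarith
end

section
/- Let A and B be positive integers with (A,B) ≠ (1,1) and set n = A + B. Then the maximum number of edges of a graph on n vertices containing exactly one subgraph isomorphic to the complete bipartite graph K_{A,B} equals C(n,2) − A − B + mup(A,B), where C(n,2) = n(n−1)/2. -/
set_option linter.unusedSectionVars false
set_option maxHeartbeats 1000000

open SimpleGraph

/-- `(𝒜, ℬ)` is a *unique partition* of `A` and `B`: the parts are positive, `𝒜` sums to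
`A`, `ℬ` sums to `B`, no element of `𝒜` equals an element of `ℬ`, and the only way to
split the combined multiset `𝒜 + ℬ` into an ordered pair of multisets summing to `A` and
`B` respectively is `(𝒜, ℬ)` itself, or `(ℬ, 𝒜)` in case `A = B`. -/
def UniquePartition (A B : ℕ) (𝒜 ℬ : Multiset ℕ) : Prop :=
  (∀ x ∈ 𝒜, 0 < x) ∧ (∀ x ∈ ℬ, 0 < x) ∧ 𝒜.sum = A ∧ ℬ.sum = B ∧
  (∀ x ∈ 𝒜, x ∉ ℬ) ∧
  (∀ 𝒜' ℬ' : Multiset ℕ, 𝒜' + ℬ' = 𝒜 + ℬ → 𝒜'.sum = A → ℬ'.sum = B →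
    (𝒜' = 𝒜 ∧ ℬ' = ℬ) ∨ (A = B ∧ 𝒜' = ℬ ∧ ℬ' = 𝒜))

/-- `mup(A, B)`: the maximum of `|𝒜| + |ℬ|` over all unique partitions of `A` and `B`. -/
noncomputable def mup (A B : ℕ) : ℕ :=
  sSup {s | ∃ 𝒜 ℬ : Multiset ℕ, UniquePartition A B 𝒜 ℬ ∧
    s = Multiset.card 𝒜 + Multiset.card ℬ}

/-- The smallest positive integer not dividing `c`. -/
noncomputable def minNonDivisor (c : ℕ) : ℕ := sInf {d | 0 < d ∧ ¬ d ∣ c}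

lemma msum_card_le_sum (s : Multiset ℕ) (h : ∀ x ∈ s, 0 < x) : Multiset.card s ≤ s.sum := by
  induction s using Multiset.induction with
  | empty => simp
  | cons a s ih =>
    simp only [Multiset.card_cons, Multiset.sum_cons]
    have h1 := h a (by simp)
    have h2 := ih (fun x hx => h x (by simp [hx]))
    omega

lemma multiset_exists_le_map {α β : Type*} [DecidableEq α] [DecidableEq β] (f : α → β) :
    ∀ (s : Multiset β) (t : Multiset α), s ≤ t.map f → ∃ u ≤ t, u.map f = s := by
  intro s
  induction s using Multiset.induction with
  | empty => exact fun t _ => ⟨0, Multiset.zero_le t, rfl⟩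
  | cons a s ih =>
    intro t hle
    have ha : a ∈ t.map f := Multiset.mem_of_le hle (by simp)
    obtain ⟨x, hx, hfx⟩ := Multiset.mem_map.1 ha
    have h2 : s ≤ (t.erase x).map f := by
      rw [Multiset.map_erase_of_mem f t hx, hfx]
      have := Multiset.erase_le_erase a hle
      rwa [Multiset.erase_cons_head] at this
    obtain ⟨u, hu, hmap⟩ := ih (t.erase x) h2
    refine ⟨x ::ₘ u, ?_, by simp [hmap, hfx]⟩
    calc x ::ₘ u ≤ x ::ₘ t.erase x := Multiset.cons_le_cons _ hu
    _ = t := Multiset.cons_erase hx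

lemma multiset_pos_sum_zero {s : Multiset ℕ} (h : ∀ x ∈ s, 0 < x) (hs : s.sum = 0) : s = 0 := by
  induction s using Multiset.induction with
  | empty => rfl
  | cons a s ih =>
    simp only [Multiset.sum_cons] at hs
    have := h a (by simp)
    omega

lemma up_singleton (A B : ℕ) (hA : 0 < A) (ℬ : Multiset ℕ) (hpos : ∀ x ∈ ℬ, 0 < x)
    (hsum : ℬ.sum = B) (hnm : A ∉ ℬ)
    (hspec : ∀ s ≤ ℬ, s.sum = A → A = B ∧ s = ℬ) : UniquePartition A B {A} ℬ := by
  refine ⟨by simpa using hA, hpos, by simp, hsum, by simpa using hnm, ?_⟩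
  intro 𝒜' ℬ' hadd hsa hsb
  have hcomb : 𝒜' + ℬ' = A ::ₘ ℬ := by rwa [show ({A} : Multiset ℕ) + ℬ = A ::ₘ ℬ by simp] at hadd
  by_cases hmem : A ∈ 𝒜'
  · left
    have h1 : 𝒜' = A ::ₘ 𝒜'.erase A := (Multiset.cons_erase hmem).symm
    have h2 : (𝒜'.erase A).sum = 0 := by
      have := congrArg Multiset.sum h1
      simp only [Multiset.sum_cons] at this
      omega
    have hpos' : ∀ x ∈ 𝒜'.erase A, 0 < x := by
      intro x hx
      have hx' : x ∈ A ::ₘ ℬ := by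
        rw [← hcomb]
        exact Multiset.mem_add.2 (Or.inl (Multiset.mem_of_le (Multiset.erase_le _ _) hx))
      rcases Multiset.mem_cons.1 hx' with rfl | hxb
      · exact hA
      · exact hpos _ hxb
    have h3 : 𝒜' = {A} := by
      rw [h1, multiset_pos_sum_zero hpos' h2]; rfl
    refine ⟨h3, ?_⟩
    rw [h3] at hcomb
    have : A ::ₘ ℬ' = A ::ₘ ℬ := by rwa [show ({A} : Multiset ℕ) + ℬ' = A ::ₘ ℬ' by simp] at hcomb
    exact (Multiset.cons_inj_right A).1 this
  · right
    have hle : 𝒜' ≤ A ::ₘ ℬ := hcomb ▸ Multiset.le_add_right _ _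
    have hle' : 𝒜' ≤ ℬ := by
      rw [Multiset.le_iff_count] at hle ⊢
      intro b
      have := hle b
      rcases eq_or_ne b A with rfl | hne
      · simp [Multiset.count_eq_zero_of_notMem hmem]
      · simpa [Multiset.count_cons_of_ne hne] using this
    obtain ⟨hAB, h4⟩ := hspec _ hle' hsa
    refine ⟨hAB, h4, ?_⟩
    rw [h4, add_comm] at hcomb
    rw [← Multiset.singleton_add] at hcomb
    exact add_right_cancel hcomb

lemma multiset_le_sum_eq {s t : Multiset ℕ} (hle : s ≤ t) (hpos : ∀ x ∈ t, 0 < x)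
    (hsum : s.sum = t.sum) : s = t := by
  obtain ⟨r, rfl⟩ := Multiset.le_iff_exists_add.1 hle
  have hr : r.sum = 0 := by
    have := Multiset.sum_add s r
    omega
  have : r = 0 := multiset_pos_sum_zero (fun x hx => hpos x (by simp [hx])) hr
  rw [this, add_zero]

lemma uniquePartition_exists {A B : ℕ} (hA : 1 ≤ A) (hB : 1 ≤ B) (hAB : ¬(A = 1 ∧ B = 1)) :
    ∃ 𝒜 ℬ : Multiset ℕ, UniquePartition A B 𝒜 ℬ ∧ 2 ≤ Multiset.card 𝒜 + Multiset.card ℬ := by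
  rcases eq_or_ne A B with rfl | hne
  · have hA2 : 2 ≤ A := by omega
    refine ⟨{A}, {1, A - 1}, up_singleton A A (by omega) _ ?_ ?_ ?_ ?_, by simp⟩
    · intro x hx
      rcases Multiset.mem_cons.1 hx with rfl | hx
      · omega
      · simp only [Multiset.mem_singleton] at hx; omega
    · simp only [Multiset.insert_eq_cons, Multiset.sum_cons, Multiset.sum_singleton]; omega
    · intro hmem
      rcases Multiset.mem_cons.1 hmem with h | h
      · omega
      · simp only [Multiset.mem_singleton] at h; omega
    · intro s hle hsum
      refine ⟨rfl, multiset_le_sum_eq hle ?_ ?_⟩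
      · intro x hx
        rcases Multiset.mem_cons.1 hx with rfl | hx
        · omega
        · simp only [Multiset.mem_singleton] at hx; omega
      · rw [hsum]
        simp only [Multiset.insert_eq_cons, Multiset.sum_cons, Multiset.sum_singleton]; omega
  · refine ⟨{A}, {B}, up_singleton A B (by omega) _ ?_ ?_ ?_ ?_, by simp⟩
    · intro x hx; simp only [Multiset.mem_singleton] at hx; omega
    · simp
    · simpa using hne
    · intro s hle hsum
      rcases Multiset.le_singleton.1 hle with rfl | rfl
      · simp at hsum; omega
      · simp at hsum; omega

lemma mup_bddAbove (A B : ℕ) : BddAbove {s | ∃ 𝒜 ℬ : Multiset ℕ, UniquePartition A B 𝒜 ℬ ∧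
    s = Multiset.card 𝒜 + Multiset.card ℬ} := by
  refine ⟨A + B, ?_⟩
  rintro s ⟨𝒜, ℬ, h, rfl⟩
  obtain ⟨h1, h2, h3, h4, -⟩ := h
  have := msum_card_le_sum 𝒜 h1
  have := msum_card_le_sum ℬ h2
  omega

lemma le_mup {A B : ℕ} {𝒜 ℬ : Multiset ℕ} (h : UniquePartition A B 𝒜 ℬ) :
    Multiset.card 𝒜 + Multiset.card ℬ ≤ mup A B :=
  le_csSup (mup_bddAbove A B) ⟨𝒜, ℬ, h, rfl⟩

lemma two_le_mup {A B : ℕ} (hA : 1 ≤ A) (hB : 1 ≤ B) (hAB : ¬(A = 1 ∧ B = 1)) :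
    2 ≤ mup A B := by
  obtain ⟨𝒜, ℬ, h, h2⟩ := uniquePartition_exists hA hB hAB
  exact h2.trans (le_mup h)

lemma mup_le (A B : ℕ) : mup A B ≤ A + B := by
  apply csSup_le'
  rintro s ⟨𝒜, ℬ, h, rfl⟩
  obtain ⟨h1, h2, h3, h4, -⟩ := h
  have := msum_card_le_sum 𝒜 h1
  have := msum_card_le_sum ℬ h2
  omega

lemma mup_spec {A B : ℕ} (hA : 1 ≤ A) (hB : 1 ≤ B) (hAB : ¬(A = 1 ∧ B = 1)) :
    ∃ 𝒜 ℬ : Multiset ℕ, UniquePartition A B 𝒜 ℬ ∧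
      Multiset.card 𝒜 + Multiset.card ℬ = mup A B := by
  obtain ⟨𝒜, ℬ, h, -⟩ := uniquePartition_exists hA hB hAB
  have hmem := Nat.sSup_mem (s := {s | ∃ 𝒜 ℬ : Multiset ℕ, UniquePartition A B 𝒜 ℬ ∧
    s = Multiset.card 𝒜 + Multiset.card ℬ}) ⟨_, ⟨𝒜, ℬ, h, rfl⟩⟩ (mup_bddAbove A B)
  obtain ⟨𝒜', ℬ', h', heq⟩ := hmem
  exact ⟨𝒜', ℬ', h', heq.symm⟩


section Graphs
variable {V : Type*} [Fintype V]

lemma edgeCount_add_compl (G : SimpleGraph V) :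
    edgeCount G + edgeCount Gᶜ = (Fintype.card V).choose 2 := by
  classical
  have hdisj : Disjoint G.edgeSet Gᶜ.edgeSet := by
    rw [Set.disjoint_iff_inter_eq_empty, ← edgeSet_inf, inf_compl_eq_bot, edgeSet_bot]
  have hunion : G.edgeSet ∪ Gᶜ.edgeSet = (⊤ : SimpleGraph V).edgeSet := by
    rw [← edgeSet_sup, sup_compl_eq_top]
  have h1 : (G.edgeSet ∪ Gᶜ.edgeSet).ncard = edgeCount G + edgeCount Gᶜ :=
    Set.ncard_union_eq hdisj (Set.toFinite _) (Set.toFinite _)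
  rw [hunion] at h1
  rw [← h1]
  rw [Set.ncard_eq_toFinset_card']
  rw [← SimpleGraph.card_edgeFinset_top_eq_card_choose_two (V := V)]
  congr 1

lemma edgeCount_le (G : SimpleGraph V) : edgeCount G ≤ (Fintype.card V).choose 2 := by
  have := edgeCount_add_compl G; omega

lemma card_le_edgeCount_add_card_cc (G : SimpleGraph V) :
    Fintype.card V ≤ edgeCount G + Nat.card G.ConnectedComponent := by
  classical
  let R : Set V := Set.range (fun c : G.ConnectedComponent => c.out)
  have key : ∀ (v r : V) , v ≠ r → G.Reachable v r → ∃ w, G.Adj v w ∧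
      G.dist w r < G.dist v r := by
    intro v r hne hreach
    have hpos : 0 < G.dist v r := hreach.pos_dist_of_ne hne
    obtain ⟨p, hp⟩ := hreach.exists_walk_length_eq_dist
    cases p with
    | nil => exact absurd rfl hne
    | cons h q =>
      refine ⟨_, h, ?_⟩
      have : G.dist _ r ≤ q.length := SimpleGraph.dist_le q
      simp only [SimpleGraph.Walk.length_cons] at hp
      omega
  have key2 : ∀ v : V, v ∉ R → ∃ w, G.Adj v w ∧
      G.dist w (G.connectedComponentMk v).out < G.dist v (G.connectedComponentMk v).out := by
    intro v hv
    refine key v (G.connectedComponentMk v).out ?_ ?_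
    · intro h
      exact hv ⟨G.connectedComponentMk v, h.symm⟩
    · have : G.connectedComponentMk ((G.connectedComponentMk v).out) = G.connectedComponentMk v :=
        (G.connectedComponentMk v).out_eq
      exact (SimpleGraph.ConnectedComponent.eq.1 this).symm
  choose w hw hd using key2
  have hinj : Function.Injective (fun x : {v : V // v ∉ R} =>
      (⟨s(x.1, w x.1 x.2), (G.mem_edgeSet).2 (hw x.1 x.2)⟩ : G.edgeSet)) := by
    rintro ⟨v, hv⟩ ⟨v', hv'⟩ h
    simp only [Subtype.mk.injEq, Sym2.eq, Sym2.rel_iff', Prod.mk.injEq, Prod.swap_prod_mk] at h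
    rcases h with ⟨h1, h2⟩ | ⟨h1, h2⟩
    · exact Subtype.ext h1
    · exfalso
      have hadj : G.Adj v v' := h2 ▸ hw v hv
      have hcc : G.connectedComponentMk v = G.connectedComponentMk v' :=
        SimpleGraph.ConnectedComponent.sound hadj.reachable
      have d1 := hd v hv
      have d2 := hd v' hv'
      rw [h2, hcc] at d1
      rw [← h1] at d2
      omega
  have h1 : Nat.card {v : V // v ∉ R} ≤ Nat.card G.edgeSet :=
    Nat.card_le_card_of_injective _ hinj
  have h2 : Nat.card ↥R ≤ Nat.card G.ConnectedComponent := Finite.card_range_le _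
  have h3 : R.ncard + Rᶜ.ncard = Nat.card V := Set.ncard_add_ncard_compl R
  have h4 : Nat.card {v : V // v ∉ R} = Rᶜ.ncard := by
    rw [← Nat.card_coe_set_eq]
    exact Nat.card_congr (Equiv.subtypeEquivRight (by simp))
  have h5 : Nat.card ↥R = R.ncard := Nat.card_coe_set_eq R
  have h6 : Nat.card G.edgeSet = edgeCount G := Nat.card_coe_set_eq _
  have h7 : Nat.card V = Fintype.card V := Nat.card_eq_fintype_card
  omega

end Graphs



section Cut
variable {V : Type*} [Fintype V]

def cutSub (G : SimpleGraph V) (S : Set V) : G.Subgraph where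
  verts := Set.univ
  Adj a b := G.Adj a b ∧ ((a ∈ S) ↔ (b ∉ S))
  adj_sub h := h.1
  edge_vert _ := Set.mem_univ _
  symm := ⟨fun a b h => ⟨h.1.symm, by tauto⟩⟩

def IsCutSide (G : SimpleGraph V) (A : ℕ) (S : Set V) : Prop :=
  S.ncard = A ∧ ∀ a ∈ S, ∀ b ∉ S, G.Adj a b

lemma cutSub_adj (G : SimpleGraph V) (S : Set V) (a b : V) :
    (cutSub G S).Adj a b ↔ G.Adj a b ∧ ((a ∈ S) ↔ (b ∉ S)) := Iff.rfl

lemma cutSub_compl (G : SimpleGraph V) (S : Set V) : cutSub G Sᶜ = cutSub G S := by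
  refine SimpleGraph.Subgraph.ext rfl ?_
  funext a b
  simp only [cutSub, Set.mem_compl_iff, eq_iff_iff]
  tauto

lemma mem_copies_iff {A B : ℕ} (G : SimpleGraph V) (hcard : Fintype.card V = A + B)
    (H : G.Subgraph) :
    Nonempty (H.coe ≃g completeBipartiteGraph (Fin A) (Fin B)) ↔
      ∃ S, IsCutSide G A S ∧ cutSub G S = H := by
  classical
  constructor
  · rintro ⟨e⟩
    have hv1 : Nat.card H.verts = A + B := by
      have := Nat.card_congr e.toEquiv
      simpa [Nat.card_eq_fintype_card] using this
    have hverts : H.verts = Set.univ := by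
      apply Set.eq_of_subset_of_ncard_le (Set.subset_univ _) ?_ (Set.toFinite _)
      have h2 : H.verts.ncard = A + B := by rw [← Nat.card_coe_set_eq, hv1]
      rw [Set.ncard_univ, Nat.card_eq_fintype_card, hcard, h2]
    have hmem : ∀ v, v ∈ H.verts := by rw [hverts]; exact fun v => Set.mem_univ v
    set f : V → Fin A ⊕ Fin B := fun v => e ⟨v, hmem v⟩ with hf
    have hfinj : Function.Injective f := by
      intro a b h
      have h2 : (⟨a, hmem a⟩ : H.verts) = ⟨b, hmem b⟩ := e.toEquiv.injective h
      exact congrArg Subtype.val h2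
    have hfsurj : Function.Surjective f := by
      intro u
      refine ⟨(e.symm u : H.verts).1, ?_⟩
      show e ⟨_, _⟩ = u
      rw [Subtype.coe_eta]
      exact e.apply_symm_apply u
    set S : Set V := {v | (f v).isLeft} with hSdef
    have hmemS : ∀ v, v ∈ S ↔ ∃ y, f v = Sum.inl y := by
      intro v; simp [hSdef, Sum.isLeft_iff]
    have hmemS' : ∀ v, v ∉ S ↔ ∃ y, f v = Sum.inr y := by
      intro v
      rw [hmemS]
      rcases hfv : f v with y | y
      · simp
      · simp
    have hadj : ∀ a b, H.Adj a b ↔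
        ((f a).isLeft ∧ (f b).isRight ∨ (f a).isRight ∧ (f b).isLeft) := by
      intro a b
      have h1 : H.Adj a b ↔ H.coe.Adj ⟨a, hmem a⟩ ⟨b, hmem b⟩ := by simp
      rw [h1, ← e.map_rel_iff]
      simp [completeBipartiteGraph]
      exact Iff.rfl
    have hadj2 : ∀ a b, H.Adj a b ↔ ((a ∈ S ∧ b ∉ S) ∨ (b ∈ S ∧ a ∉ S)) := by
      intro a b
      rw [hadj a b]
      rcases hfa : f a with y | y <;> rcases hfb : f b with z | z <;>
        simp [hmemS, hmemS', hfa, hfb]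
    have hS : S.ncard = A := by
      rw [← Nat.card_coe_set_eq]
      have e1 : ↥S ≃ {u : Fin A ⊕ Fin B // u.isLeft} :=
        (Equiv.ofBijective f ⟨hfinj, hfsurj⟩).subtypeEquiv (fun v => Iff.rfl)
      have e2 : {u : Fin A ⊕ Fin B // u.isLeft} ≃ Fin A := by
        refine ⟨fun u => u.1.getLeft u.2, fun a => ⟨Sum.inl a, rfl⟩, ?_, fun a => rfl⟩
        rintro ⟨u, h⟩
        cases u with
        | inl a => rfl
        | inr b => simp at h
      rw [Nat.card_congr (e1.trans e2), Nat.card_eq_fintype_card, Fintype.card_fin]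
    refine ⟨S, ⟨hS, ?_⟩, ?_⟩
    · intro a ha b hb
      exact H.adj_sub ((hadj2 a b).2 (Or.inl ⟨ha, hb⟩))
    · apply SimpleGraph.Subgraph.ext (by rw [hverts]; rfl)
      funext a b
      rw [eq_iff_iff, cutSub_adj, hadj2]
      constructor
      · rintro ⟨hG, hiff⟩
        by_cases ha : a ∈ S
        · exact Or.inl ⟨ha, hiff.1 ha⟩
        · refine Or.inr ⟨?_, ha⟩
          by_contra hb
          exact ha (hiff.2 hb)
      · rintro (⟨ha, hb⟩ | ⟨hb, ha⟩)
        · exact ⟨H.adj_sub ((hadj2 a b).2 (Or.inl ⟨ha, hb⟩)), by tauto⟩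
        · exact ⟨H.adj_sub ((hadj2 a b).2 (Or.inr ⟨hb, ha⟩)), by tauto⟩
  · rintro ⟨S, ⟨hS, hcross⟩, rfl⟩
    have hSc : Sᶜ.ncard = B := by
      have := Set.ncard_add_ncard_compl S
      rw [hS, Nat.card_eq_fintype_card, hcard] at this
      omega
    have eS : ↥S ≃ Fin A := by
      apply Fintype.equivFinOfCardEq
      rw [← Nat.card_eq_fintype_card, Nat.card_coe_set_eq, hS]
    have eSc : ↥(Sᶜ) ≃ Fin B := by
      apply Fintype.equivFinOfCardEq
      rw [← Nat.card_eq_fintype_card, Nat.card_coe_set_eq, hSc]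
    refine ⟨⟨((Equiv.Set.univ V).trans (Equiv.Set.sumCompl S).symm).trans
      (Equiv.sumCongr eS eSc), ?_⟩⟩
    rintro ⟨a, _⟩ ⟨b, _⟩
    show (completeBipartiteGraph (Fin A) (Fin B)).Adj (Equiv.sumCongr eS eSc ((Equiv.Set.sumCompl S).symm a))
      (Equiv.sumCongr eS eSc ((Equiv.Set.sumCompl S).symm b)) ↔ _
    rw [SimpleGraph.Subgraph.coe_adj, cutSub_adj]
    by_cases ha : a ∈ S <;> by_cases hb : b ∈ S
    · rw [Equiv.Set.sumCompl_symm_apply_of_mem ha, Equiv.Set.sumCompl_symm_apply_of_mem hb]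
      simp [ha, hb]
    · rw [Equiv.Set.sumCompl_symm_apply_of_mem ha, Equiv.Set.sumCompl_symm_apply_of_notMem hb]
      simpa [ha, hb] using hcross a ha b hb
    · rw [Equiv.Set.sumCompl_symm_apply_of_notMem ha, Equiv.Set.sumCompl_symm_apply_of_mem hb]
      simpa [ha, hb] using (hcross b hb a ha).symm
    · rw [Equiv.Set.sumCompl_symm_apply_of_notMem ha, Equiv.Set.sumCompl_symm_apply_of_notMem hb]
      simp [ha, hb]


lemma cutSub_eq_iff {A : ℕ} (G : SimpleGraph V) (hne : Nonempty V)
    {S T : Set V} (hS : IsCutSide G A S) (hT : IsCutSide G A T)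
    (h : cutSub G T = cutSub G S) : T = S ∨ T = Sᶜ := by
  have hAdj : ∀ a b, (cutSub G T).Adj a b ↔ (cutSub G S).Adj a b := by rw [h]; exact fun a b => Iff.rfl
  have k1 : ∀ a b, (a ∈ T ↔ b ∉ T) → (a ∈ S ↔ b ∉ S) := by
    intro a b hab
    by_cases ha : a ∈ T
    · have hb : b ∉ T := hab.1 ha
      have hadj : (cutSub G T).Adj a b := ⟨hT.2 a ha b hb, hab⟩
      exact ((hAdj a b).1 hadj).2
    · have hb : b ∈ T := by tauto
      have hadj : (cutSub G T).Adj b a := ⟨hT.2 b hb a ha, by tauto⟩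
      have := ((hAdj b a).1 hadj).2
      tauto
  have k2 : ∀ a b, (a ∈ S ↔ b ∉ S) → (a ∈ T ↔ b ∉ T) := by
    intro a b hab
    by_cases ha : a ∈ S
    · have hb : b ∉ S := hab.1 ha
      have hadj : (cutSub G S).Adj a b := ⟨hS.2 a ha b hb, hab⟩
      exact ((hAdj a b).2 hadj).2
    · have hb : b ∈ S := by tauto
      have hadj : (cutSub G S).Adj b a := ⟨hS.2 b hb a ha, by tauto⟩
      have := ((hAdj b a).2 hadj).2
      tauto
  obtain ⟨v₀⟩ := hne
  by_cases h0 : v₀ ∈ T ↔ v₀ ∈ S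
  · left
    ext u
    have p1 := k1 u v₀; have p2 := k2 u v₀; have p3 := k1 v₀ u; have p4 := k2 v₀ u
    tauto
  · right
    ext u
    simp only [Set.mem_compl_iff]
    have p1 := k1 u v₀; have p2 := k2 u v₀; have p3 := k1 v₀ u; have p4 := k2 v₀ u
    tauto

lemma copyCount_eq_one_iff {A B : ℕ} (G : SimpleGraph V) (hcard : Fintype.card V = A + B)
    (hpos : 0 < A + B) :
    _root_.copyCount G (completeBipartiteGraph (Fin A) (Fin B)) = 1 ↔
      ∃ S, IsCutSide G A S ∧ ∀ T, IsCutSide G A T → T = S ∨ T = Sᶜ := by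
  have hne : Nonempty V := by
    rw [← Fintype.card_pos_iff, hcard]; omega
  rw [_root_.copyCount, Set.ncard_eq_one]
  have hset : {H : G.Subgraph | Nonempty (H.coe ≃g completeBipartiteGraph (Fin A) (Fin B))} =
      cutSub G '' {S | IsCutSide G A S} := by
    ext H
    rw [Set.mem_setOf_eq, mem_copies_iff G hcard]
    constructor
    · rintro ⟨S, h1, h2⟩; exact ⟨S, h1, h2⟩
    · rintro ⟨S, h1, h2⟩; exact ⟨S, h1, h2⟩
  rw [hset]
  constructor
  · rintro ⟨H, hH⟩
    have hHmem : H ∈ cutSub G '' {S | IsCutSide G A S} := by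
      rw [hH]; exact rfl
    obtain ⟨S, hS, hSH⟩ := hHmem
    refine ⟨S, hS, ?_⟩
    intro T hT
    have hmem2 : cutSub G T ∈ ({H} : Set G.Subgraph) := by
      rw [← hH]; exact ⟨T, hT, rfl⟩
    rw [Set.mem_singleton_iff] at hmem2
    exact cutSub_eq_iff G hne hS hT (hmem2.trans hSH.symm)
  · rintro ⟨S, hS, huniq⟩
    refine ⟨cutSub G S, ?_⟩
    apply Set.eq_singleton_iff_unique_mem.2
    refine ⟨⟨S, hS, rfl⟩, ?_⟩
    rintro H ⟨T, hT, rfl⟩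
    rcases huniq T hT with rfl | rfl
    · rfl
    · exact cutSub_compl G S

end Cut



section Blocks
variable {V : Type*} [Fintype V]

def CrossFree (G' : SimpleGraph V) (S : Set V) : Prop :=
  ∀ ⦃a b⦄, G'.Adj a b → (a ∈ S ↔ b ∈ S)

lemma isCutSide_iff_crossFree {A : ℕ} (G : SimpleGraph V) (S : Set V) :
    IsCutSide G A S ↔ S.ncard = A ∧ CrossFree Gᶜ S := by
  unfold IsCutSide CrossFree
  refine and_congr_right fun _ => ?_
  constructor
  · intro h a b hadj
    rw [SimpleGraph.compl_adj] at hadj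
    by_contra hcon
    rcases Classical.em (a ∈ S) with ha | ha
    · have hb : b ∉ S := by tauto
      exact hadj.2 (h a ha b hb)
    · have hb : b ∈ S := by tauto
      exact hadj.2 ((h b hb a ha).symm)
  · intro h a ha b hb
    have hne : a ≠ b := fun e => hb (e ▸ ha)
    by_contra hadj
    have hc : Gᶜ.Adj a b := by rw [SimpleGraph.compl_adj]; exact ⟨hne, hadj⟩
    exact hb ((h hc).1 ha)

lemma crossFree_reachable {G' : SimpleGraph V} {S : Set V} (h : CrossFree G' S)
    {a b : V} (hr : G'.Reachable a b) : a ∈ S ↔ b ∈ S := by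
  obtain ⟨p⟩ := hr
  induction p with
  | nil => exact Iff.rfl
  | cons hadj q ih => exact (h hadj).trans ih

variable {ι : Type*} [Fintype ι]

def bfib (β : V → ι) (i : ι) : Set V := β ⁻¹' {i}

def Closed (β : V → ι) (S : Set V) : Prop := ∀ a b, β a = β b → (a ∈ S ↔ b ∈ S)

noncomputable def blocksIn (β : V → ι) (S : Set V) : Finset ι :=
  @Finset.filter ι (fun i => bfib β i ⊆ S) (Classical.decPred _) Finset.univ

noncomputable def msizes (β : V → ι) (F : Finset ι) : Multiset ℕ :=
  F.val.map (fun i => (bfib β i).ncard)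

lemma msizes_card (β : V → ι) (F : Finset ι) : Multiset.card (msizes β F) = F.card := by
  simp [msizes]

lemma mem_blocksIn {β : V → ι} {S : Set V} {i : ι} :
    i ∈ blocksIn β S ↔ bfib β i ⊆ S := by
  classical
  rw [blocksIn, Finset.filter_congr_decidable, Finset.mem_filter]
  simp

lemma mem_bfib {β : V → ι} {i : ι} {v : V} : v ∈ bfib β i ↔ β v = i := Iff.rfl

variable {β : V → ι}

lemma bfib_nonempty (hsurj : Function.Surjective β) (i : ι) : (bfib β i).Nonempty := by
  obtain ⟨v, rfl⟩ := hsurj i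
  exact ⟨v, rfl⟩

lemma bfib_pos (hsurj : Function.Surjective β) (i : ι) : 0 < (bfib β i).ncard :=
  (Set.ncard_pos (Set.toFinite _)).2 (bfib_nonempty hsurj i)

lemma closed_mem_iff {S : Set V} (hS : Closed β S) {v : V} :
    v ∈ S ↔ β v ∈ blocksIn β S := by
  constructor
  · intro hv
    rw [mem_blocksIn]
    intro u hu
    exact (hS u v hu).2 hv  -- hu : β u = β v
  · intro h
    exact (mem_blocksIn.1 h) (show v ∈ bfib β (β v) from rfl)

lemma closed_eq_preimage {S : Set V} (hS : Closed β S) : S = β ⁻¹' ↑(blocksIn β S) := by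
  ext v
  rw [closed_mem_iff hS]
  simp

lemma closed_preimage (T : Set ι) : Closed β (β ⁻¹' T) := by
  intro a b h
  simp [Set.mem_preimage, h]

lemma closed_compl {S : Set V} (hS : Closed β S) : Closed β Sᶜ := by
  intro a b h
  simp [Set.mem_compl_iff, hS a b h]

lemma blocksIn_preimage (hsurj : Function.Surjective β) (T : Finset ι) : blocksIn β (β ⁻¹' ↑T) = T := by
  ext i
  rw [mem_blocksIn]
  constructor
  · intro h
    obtain ⟨v, hv⟩ := bfib_nonempty hsurj i
    have := h hv
    rw [Set.mem_preimage, mem_bfib.1 hv] at this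
    simpa using this
  · intro h v hv
    rw [Set.mem_preimage, mem_bfib.1 hv]
    simpa using h

lemma ncard_preimage_finset (T : Finset ι) : (β ⁻¹' ↑T).ncard = (msizes β T).sum := by
  classical
  have h1 : (β ⁻¹' ↑T).toFinset = T.biUnion (fun i => (bfib β i).toFinset) := by
    ext v
    simp only [Set.mem_toFinset, Set.mem_preimage, Finset.mem_coe, Finset.mem_biUnion, bfib,
      Set.mem_singleton_iff]
    constructor
    · intro h; exact ⟨β v, h, Set.mem_toFinset.2 rfl⟩
    · rintro ⟨i, hi, hv⟩; have hv' : β v = i := (Set.mem_toFinset (s := β ⁻¹' {i})).1 hv; rw [hv']; exact hi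
  rw [Set.ncard_eq_toFinset_card', h1, Finset.card_biUnion]
  · have h2 : (msizes β T).sum = ∑ i ∈ T, (bfib β i).ncard := rfl
    rw [h2]
    exact Finset.sum_congr rfl fun i _ => (Set.ncard_eq_toFinset_card' _).symm
  · intro x hx y hy hxy
    show Disjoint (bfib β x).toFinset (bfib β y).toFinset
    rw [Finset.disjoint_left]
    intro v hv hv'
    rw [Set.mem_toFinset, mem_bfib] at hv hv'
    exact hxy (hv ▸ hv')

lemma blocksIn_disjUnion_eq (hsurj : Function.Surjective β) {S : Set V} (hS : Closed β S) :
    ∃ h, (blocksIn β S).disjUnion (blocksIn β Sᶜ) h = Finset.univ := by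
  have hdisj : Disjoint (blocksIn β S) (blocksIn β Sᶜ) := by
    rw [Finset.disjoint_left]
    intro i hi hi'
    obtain ⟨v, hv⟩ := bfib_nonempty hsurj i
    exact (mem_blocksIn.1 hi' hv) (mem_blocksIn.1 hi hv)
  refine ⟨hdisj, ?_⟩
  ext i
  simp only [Finset.mem_disjUnion, Finset.mem_univ, iff_true]
  obtain ⟨v, hv⟩ := bfib_nonempty hsurj i
  by_cases hvS : v ∈ S
  · left
    rw [mem_blocksIn]
    intro u hu
    exact (hS u v ((mem_bfib.1 hu).trans (mem_bfib.1 hv).symm)).2 hvS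
  · right
    rw [mem_blocksIn]
    intro u hu
    exact fun huS => hvS ((hS u v ((mem_bfib.1 hu).trans (mem_bfib.1 hv).symm)).1 huS)

lemma msizes_split (hsurj : Function.Surjective β) {S : Set V} (hS : Closed β S) :
    msizes β (blocksIn β S) + msizes β (blocksIn β Sᶜ) = msizes β Finset.univ := by
  obtain ⟨h, huniv⟩ := blocksIn_disjUnion_eq hsurj hS
  rw [← huniv]
  have hval : ((blocksIn β S).disjUnion (blocksIn β Sᶜ) h).val = (blocksIn β S).val + (blocksIn β Sᶜ).val := rfl
  rw [msizes, msizes, msizes, hval, Multiset.map_add]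

lemma blocks_card_split (hsurj : Function.Surjective β) {S : Set V} (hS : Closed β S) :
    (blocksIn β S).card + (blocksIn β Sᶜ).card = Fintype.card ι := by
  obtain ⟨h, huniv⟩ := blocksIn_disjUnion_eq hsurj hS
  rw [← Finset.card_univ, ← huniv, Finset.card_disjUnion]

end Blocks
lemma upper_bound (A B : ℕ) (hA : 1 ≤ A) (hB : 1 ≤ B) (hAB : ¬(A = 1 ∧ B = 1))
    (G : SimpleGraph (Fin (A + B)))
    (h1 : _root_.copyCount G (completeBipartiteGraph (Fin A) (Fin B)) = 1) :
    edgeCount G ≤ (A + B).choose 2 - A - B + mup A B := by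
  classical
  have hcard : Fintype.card (Fin (A + B)) = A + B := Fintype.card_fin _
  rw [copyCount_eq_one_iff G hcard (by omega)] at h1
  obtain ⟨S₀, hS₀, huniq⟩ := h1
  set G' := Gᶜ with hG'
  haveI : Fintype G'.ConnectedComponent := Fintype.ofFinite _
  set β : Fin (A + B) → G'.ConnectedComponent := G'.connectedComponentMk with hβ
  have hsurj : Function.Surjective β := fun c => ⟨c.out, c.out_eq⟩
  have hcutiff : ∀ T : Set (Fin (A + B)), IsCutSide G A T ↔ (T.ncard = A ∧ Closed β T) := by
    intro T
    rw [isCutSide_iff_crossFree]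
    refine and_congr_right fun _ => ?_
    constructor
    · intro h a b hab
      exact crossFree_reachable h (SimpleGraph.ConnectedComponent.exact hab)
    · intro h a b hadj
      exact h a b (SimpleGraph.ConnectedComponent.sound hadj.reachable)
  have hclosed : Closed β S₀ := ((hcutiff S₀).1 hS₀).2
  set 𝒜 := msizes β (blocksIn β S₀) with h𝒜
  set ℬ := msizes β (blocksIn β S₀ᶜ) with hℬ
  have hsum𝒜 : 𝒜.sum = A := by
    rw [h𝒜, ← ncard_preimage_finset, ← closed_eq_preimage hclosed]
    exact hS₀.1
  have hSc : S₀ᶜ.ncard = B := by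
    have := Set.ncard_add_ncard_compl S₀
    rw [hS₀.1, Nat.card_eq_fintype_card, hcard] at this
    omega
  have hsumℬ : ℬ.sum = B := by
    rw [hℬ, ← ncard_preimage_finset, ← closed_eq_preimage (closed_compl hclosed)]
    exact hSc
  have hsplit := msizes_split hsurj hclosed
  have hk : Multiset.card 𝒜 + Multiset.card ℬ = Fintype.card G'.ConnectedComponent := by
    rw [h𝒜, hℬ, msizes_card, msizes_card]
    exact blocks_card_split hsurj hclosed
  have hkmup : Fintype.card G'.ConnectedComponent ≤ mup A B := by
    by_cases hdis : ∀ x ∈ 𝒜, x ∉ ℬ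
    · have hup : UniquePartition A B 𝒜 ℬ := by
        refine ⟨?_, ?_, hsum𝒜, hsumℬ, hdis, ?_⟩
        · intro x hx
          rw [h𝒜, msizes] at hx
          obtain ⟨i, hi, rfl⟩ := Multiset.mem_map.1 hx
          exact bfib_pos hsurj i
        · intro x hx
          rw [hℬ, msizes] at hx
          obtain ⟨i, hi, rfl⟩ := Multiset.mem_map.1 hx
          exact bfib_pos hsurj i
        · intro 𝒜' ℬ' hadd hsa hsb
          have hle : 𝒜' ≤ Finset.univ.val.map (fun i => (bfib β i).ncard) := by
            have : 𝒜' ≤ 𝒜 + ℬ := hadd ▸ Multiset.le_add_right _ _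
            rw [hsplit] at this
            exact this
          obtain ⟨u, hu, hmap⟩ := multiset_exists_le_map _ _ _ hle
          have hnodup : u.Nodup := Multiset.nodup_of_le hu Finset.univ.nodup
          set T : Finset G'.ConnectedComponent := ⟨u, hnodup⟩ with hT
          have hmsT : msizes β T = 𝒜' := hmap
          set ST : Set (Fin (A + B)) := β ⁻¹' ↑T with hST
          have hSTcut : IsCutSide G A ST := by
            rw [hcutiff]
            refine ⟨?_, closed_preimage _⟩
            rw [hST, ncard_preimage_finset, hmsT, hsa]
          have hTeq : T = blocksIn β ST := (blocksIn_preimage hsurj T).symm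
          rcases huniq ST hSTcut with hc | hc
          · left
            have h𝒜'eq : 𝒜' = 𝒜 := by
              rw [← hmsT, hTeq, hc, h𝒜]
            refine ⟨h𝒜'eq, ?_⟩
            rw [h𝒜'eq] at hadd
            exact add_left_cancel hadd
          · right
            have h𝒜'eq : 𝒜' = ℬ := by
              rw [← hmsT, hTeq, hc, hℬ]
            have hABeq : A = B := by rw [← hsa, h𝒜'eq, hsumℬ]
            refine ⟨hABeq, h𝒜'eq, ?_⟩
            rw [h𝒜'eq, add_comm ℬ ℬ'] at hadd
            exact add_right_cancel hadd
      rw [← hk]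
      exact le_mup hup
    · push_neg at hdis
      obtain ⟨x, hx𝒜, hxℬ⟩ := hdis
      rw [h𝒜, msizes] at hx𝒜
      rw [hℬ, msizes] at hxℬ
      obtain ⟨c, hc, hcx⟩ := Multiset.mem_map.1 hx𝒜
      obtain ⟨d, hd, hdx⟩ := Multiset.mem_map.1 hxℬ
      rw [← Finset.mem_def] at hc hd
      have hcS : bfib β c ⊆ S₀ := mem_blocksIn.1 hc
      have hdS : bfib β d ⊆ S₀ᶜ := mem_blocksIn.1 hd
      have hcd : c ≠ d := by
        intro h
        obtain ⟨v, hv⟩ := bfib_nonempty hsurj c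
        exact (hdS (h ▸ hv)) (hcS hv)
      set S₁ : Set (Fin (A + B)) := (S₀ \ bfib β c) ∪ bfib β d with hS₁
      have hmem₁ : ∀ a, a ∈ S₁ ↔ ((β a ∈ blocksIn β S₀ ∧ β a ≠ c) ∨ β a = d) := by
        intro a
        rw [hS₁]
        simp only [Set.mem_union, Set.mem_diff, mem_bfib]
        rw [closed_mem_iff hclosed]
      have hclosed₁ : Closed β S₁ := by
        intro a b h
        rw [hmem₁, hmem₁, h]
      have hxA : x ≤ A := by
        rw [← hS₀.1, ← hcx]
        exact Set.ncard_le_ncard hcS (Set.toFinite _)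
      have hncard₁ : S₁.ncard = A := by
        rw [hS₁, Set.ncard_union_eq ?hdisj (Set.toFinite _) (Set.toFinite _),
          Set.ncard_diff hcS (Set.toFinite _), hS₀.1, hcx, hdx]
        · omega
        case hdisj =>
          refine Set.disjoint_left.2 fun v hv hv' => ?_
          exact (hdS hv') hv.1
      have hcut₁ : IsCutSide G A S₁ := (hcutiff S₁).2 ⟨hncard₁, hclosed₁⟩
      rcases huniq S₁ hcut₁ with hc1 | hc1
      · exfalso
        obtain ⟨v, hv⟩ := bfib_nonempty hsurj d
        have hv₁ : v ∈ S₁ := (hmem₁ v).2 (Or.inr (mem_bfib.1 hv))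
        rw [hc1] at hv₁
        exact (hdS hv) hv₁
      · -- each side is a single block
        have hbc : blocksIn β S₀ = {c} := by
          ext i
          rw [Finset.mem_singleton]
          constructor
          · intro hi
            by_contra hne
            obtain ⟨v, hv⟩ := bfib_nonempty hsurj i
            have hvS₁ : v ∈ S₁ := (hmem₁ v).2 (Or.inl ⟨(mem_bfib.1 hv) ▸ hi, (mem_bfib.1 hv) ▸ hne⟩)
            rw [hc1] at hvS₁
            exact hvS₁ (mem_blocksIn.1 hi hv)
          · rintro rfl; exact hc
        have hbd : blocksIn β S₀ᶜ = {d} := by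
          ext i
          rw [Finset.mem_singleton]
          constructor
          · intro hi
            by_contra hne
            obtain ⟨v, hv⟩ := bfib_nonempty hsurj i
            have hvSc : v ∈ S₀ᶜ := mem_blocksIn.1 hi hv
            rw [← hc1] at hvSc
            rcases (hmem₁ v).1 hvSc with ⟨hmem, -⟩ | heq
            · rw [mem_bfib.1 hv] at hmem
              exact (mem_blocksIn.1 hi hv) (mem_blocksIn.1 hmem hv)
            · exact hne ((mem_bfib.1 hv).symm.trans heq)
          · rintro rfl; exact hd
        have h2 : Fintype.card G'.ConnectedComponent = 2 := by
          have := blocks_card_split hsurj hclosed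
          rw [hbc, hbd] at this
          simpa using this.symm
        rw [h2]
        exact two_le_mup hA hB hAB
  have hedge := edgeCount_add_compl G
  rw [hcard, ← hG'] at hedge
  have hlow := card_le_edgeCount_add_card_cc G'
  rw [hcard, Nat.card_eq_fintype_card] at hlow
  have hmupn : mup A B ≤ A + B := mup_le A B
  have hchoose : A + B ≤ (A + B).choose 2 := by
    rw [Nat.choose_two_right, Nat.le_div_iff_mul_le (by norm_num)]
    exact Nat.mul_le_mul_left _ (by omega)
  omega

lemma sum_univ_get (l : List ℕ) : ∑ i : Fin l.length, l.get i = l.sum := by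
  rw [Fin.sum_univ_def]
  rw [List.map_get_finRange]

lemma univ_val_map_get {α : Type*} (l : List α) :
    (Finset.univ : Finset (Fin l.length)).val.map l.get = (l : Multiset α) := by
  have h : (Finset.univ : Finset (Fin l.length)).val = ↑(List.finRange l.length) := rfl
  rw [h, Multiset.map_coe, List.map_get_finRange]

lemma lower_bound (A B : ℕ) (hA : 1 ≤ A) (hB : 1 ≤ B) (hAB : ¬(A = 1 ∧ B = 1)) :
    ∃ G : SimpleGraph (Fin (A + B)),
      _root_.copyCount G (completeBipartiteGraph (Fin A) (Fin B)) = 1 ∧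
      edgeCount G = (A + B).choose 2 - A - B + mup A B := by
  classical
  obtain ⟨𝒜, ℬ, hup, hcardmup⟩ := mup_spec hA hB hAB
  obtain ⟨hpos𝒜, hposℬ, hsum𝒜, hsumℬ, hdisj, huniq⟩ := hup
  set La := 𝒜.toList with hLa
  set Lb := ℬ.toList with hLb
  set m : (Fin La.length ⊕ Fin Lb.length) → ℕ :=
    Sum.elim (fun i => La.get i) (fun j => Lb.get j) with hm
  have hmpos : ∀ i, 0 < m i := by
    rintro (i | j)
    · exact hpos𝒜 _ (Multiset.mem_toList.1 (La.get_mem i))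
    · exact hposℬ _ (Multiset.mem_toList.1 (Lb.get_mem j))
  have hsumla : La.sum = A := by rw [hLa, Multiset.sum_toList, hsum𝒜]
  have hsumlb : Lb.sum = B := by rw [hLb, Multiset.sum_toList, hsumℬ]
  have hcardW : Fintype.card (Σ i, Fin (m i)) = A + B := by
    rw [Fintype.card_sigma]
    simp only [Fintype.card_fin]
    rw [Fintype.sum_sum_type]
    simp only [hm, Sum.elim_inl, Sum.elim_inr]
    rw [sum_univ_get, sum_univ_get, hsumla, hsumlb]
  set e : (Σ i, Fin (m i)) ≃ Fin (A + B) :=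
    Fintype.equivOfCardEq (by rw [hcardW, Fintype.card_fin]) with he
  set β : Fin (A + B) → (Fin La.length ⊕ Fin Lb.length) := fun v => (e.symm v).1 with hβ
  have hsurj : Function.Surjective β := by
    intro i
    refine ⟨e ⟨i, ⟨0, hmpos i⟩⟩, ?_⟩
    show (e.symm (e ⟨i, ⟨0, hmpos i⟩⟩)).1 = i
    rw [Equiv.symm_apply_apply]
  -- fiber sizes
  have hfib : ∀ i, (bfib β i).ncard = m i := by
    intro i
    rw [← Nat.card_coe_set_eq]
    have E1 : ↥(bfib β i) ≃ {x : (Σ j, Fin (m j)) // x.1 = i} :=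
      (e.symm.subtypeEquiv (fun v => Iff.rfl))
    have E2 : {x : (Σ j, Fin (m j)) // x.1 = i} ≃ Fin (m i) := by
      refine ⟨fun x => Fin.cast (congrArg m x.2) x.1.2, fun y => ⟨⟨i, y⟩, rfl⟩, ?_, ?_⟩
      · rintro ⟨⟨j, y⟩, rfl⟩
        rfl
      · intro y
        rfl
    rw [Nat.card_congr (E1.trans E2), Nat.card_eq_fintype_card, Fintype.card_fin]
  -- the graph
  set Q : (Σ i, Fin (m i)) → (Σ i, Fin (m i)) → Prop := fun x y =>
    x.1 = y.1 ∧ (((x.2 : ℕ) = 0 ∧ (y.2 : ℕ) ≠ 0) ∨ ((y.2 : ℕ) = 0 ∧ (x.2 : ℕ) ≠ 0)) with hQ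
  have hQsymm : ∀ x y, Q x y → Q y x := by
    rintro x y ⟨h1, h2⟩
    exact ⟨h1.symm, h2.symm⟩
  have hQne : ∀ x y, Q x y → x ≠ y := by
    rintro x y ⟨h1, h2⟩ rfl
    rcases h2 with ⟨h3, h4⟩ | ⟨h3, h4⟩ <;> exact h4 h3
  set G : SimpleGraph (Fin (A + B)) :=
    { Adj := fun a b => a ≠ b ∧ ¬ Q (e.symm a) (e.symm b)
      symm := by
        constructor
        rintro a b ⟨h1, h2⟩
        exact ⟨h1.symm, fun hc => h2 (hQsymm _ _ hc)⟩
      loopless := ⟨fun a h => h.1 rfl⟩ } with hGdef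
  have hGadj : ∀ a b, G.Adj a b ↔ (a ≠ b ∧ ¬ Q (e.symm a) (e.symm b)) := fun a b => Iff.rfl
  have hGc : ∀ a b, Gᶜ.Adj a b ↔ Q (e.symm a) (e.symm b) := by
    intro a b
    rw [SimpleGraph.compl_adj, hGadj]
    constructor
    · rintro ⟨h1, h2⟩
      tauto
    · intro h
      have hne : a ≠ b := by
        intro hc
        exact hQne _ _ h (by rw [hc])
      tauto
  -- crossfree iff closed
  have hcf : ∀ S : Set (Fin (A + B)), CrossFree Gᶜ S ↔ Closed β S := by
    intro S
    constructor
    · intro h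
      have key : ∀ u : Fin (A + B), (u ∈ S ↔ (e ⟨β u, ⟨0, hmpos _⟩⟩) ∈ S) := by
        intro u
        by_cases h0 : ((e.symm u).2 : ℕ) = 0
        · have h2 : (e.symm u).2 = ⟨0, hmpos _⟩ := Fin.ext h0
          have h3 : e ⟨β u, ⟨0, hmpos _⟩⟩ = u := by
            conv_rhs => rw [← e.apply_symm_apply u]
            congr 1
            exact Sigma.ext rfl (heq_of_eq h2.symm)
          rw [h3]
        · apply h
          rw [hGc, hQ]
          rw [Equiv.symm_apply_apply]
          exact ⟨rfl, Or.inr ⟨rfl, h0⟩⟩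
      intro a b hab
      rw [key a, key b, hab]
    · intro h a b hab
      rw [hGc] at hab
      exact h a b hab.1
  have hcutiff : ∀ T : Set (Fin (A + B)), IsCutSide G A T ↔ (T.ncard = A ∧ Closed β T) := by
    intro T
    rw [isCutSide_iff_crossFree]
    exact and_congr_right fun _ => hcf T
  -- the two block finsets
  set Ta : Finset (Fin La.length ⊕ Fin Lb.length) :=
    Finset.univ.filter (fun i => i.isLeft) with hTa
  set Tb : Finset (Fin La.length ⊕ Fin Lb.length) :=
    Finset.univ.filter (fun i => i.isRight) with hTb
  have hTamap : Ta = (Finset.univ : Finset (Fin La.length)).map ⟨Sum.inl, Sum.inl_injective⟩ := by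
    ext i
    cases i <;> simp [hTa]
  have hTbmap : Tb = (Finset.univ : Finset (Fin Lb.length)).map ⟨Sum.inr, Sum.inr_injective⟩ := by
    ext i
    cases i <;> simp [hTb]
  have hmsa : msizes β Ta = 𝒜 := by
    rw [msizes, hTamap, Finset.map_val, Multiset.map_map]
    have : ((fun i => (bfib β i).ncard) ∘ (⟨Sum.inl, Sum.inl_injective⟩ : _ ↪ _)) =
        fun j : Fin La.length => La.get j := by
      funext j
      simp [hfib, hm]
    rw [this, univ_val_map_get, hLa, Multiset.coe_toList]
  have hmsb : msizes β Tb = ℬ := by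
    rw [msizes, hTbmap, Finset.map_val, Multiset.map_map]
    have : ((fun i => (bfib β i).ncard) ∘ (⟨Sum.inr, Sum.inr_injective⟩ : _ ↪ _)) =
        fun j : Fin Lb.length => Lb.get j := by
      funext j
      simp [hfib, hm]
    rw [this, univ_val_map_get, hLb, Multiset.coe_toList]
  set S₀ : Set (Fin (A + B)) := β ⁻¹' ↑Ta with hS₀def
  have hS₀compl : S₀ᶜ = β ⁻¹' ↑Tb := by
    ext v
    simp only [hS₀def, Set.mem_compl_iff, Set.mem_preimage, Finset.mem_coe, hTa, hTb,
      Finset.mem_filter, Finset.mem_univ, true_and]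
    cases hv : β v <;> simp
  have hS₀ncard : S₀.ncard = A := by
    rw [hS₀def, ncard_preimage_finset, hmsa, hsum𝒜]
  have hS₀cut : IsCutSide G A S₀ := by
    rw [hcutiff]
    exact ⟨hS₀ncard, closed_preimage _⟩
  have hblocksa : blocksIn β S₀ = Ta := blocksIn_preimage hsurj Ta
  have hblocksb : blocksIn β S₀ᶜ = Tb := by rw [hS₀compl]; exact blocksIn_preimage hsurj Tb
  have hmsuniv : msizes β Finset.univ = 𝒜 + ℬ := by
    rw [← msizes_split hsurj (closed_preimage (↑Ta : Set _)), ← hS₀def, hblocksa, hblocksb,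
      hmsa, hmsb]
  -- uniqueness of the cut
  have hcuniq : ∀ T : Set (Fin (A + B)), IsCutSide G A T → T = S₀ ∨ T = S₀ᶜ := by
    intro T hT
    rw [hcutiff] at hT
    obtain ⟨hTn, hTc⟩ := hT
    have hTeq : T = β ⁻¹' ↑(blocksIn β T) := closed_eq_preimage hTc
    have hTceq : Tᶜ = β ⁻¹' ↑(blocksIn β Tᶜ) := closed_eq_preimage (closed_compl hTc)
    have hsa : (msizes β (blocksIn β T)).sum = A := by
      rw [← ncard_preimage_finset, ← hTeq, hTn]
    have hTcn : Tᶜ.ncard = B := by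
      have := Set.ncard_add_ncard_compl T
      rw [hTn, Nat.card_eq_fintype_card, Fintype.card_fin] at this
      omega
    have hsb : (msizes β (blocksIn β Tᶜ)).sum = B := by
      rw [← ncard_preimage_finset, ← hTceq, hTcn]
    have hadd : msizes β (blocksIn β T) + msizes β (blocksIn β Tᶜ) = 𝒜 + ℬ := by
      rw [msizes_split hsurj hTc, hmsuniv]
    have hdich : ∀ i, i ∈ blocksIn β T ∨ i ∈ blocksIn β Tᶜ := by
      intro i
      obtain ⟨h, huniv'⟩ := blocksIn_disjUnion_eq hsurj hTc
      have : i ∈ (blocksIn β T).disjUnion (blocksIn β Tᶜ) h := by rw [huniv']; simp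
      simpa [Finset.mem_disjUnion] using this
    have hmemmsizes : ∀ (F : Finset _) i, i ∈ F → m i ∈ msizes β F := by
      intro F i hi
      rw [msizes]
      exact Multiset.mem_map.2 ⟨i, Finset.mem_def.1 hi, hfib i⟩
    have hmleft : ∀ j : Fin La.length, m (Sum.inl j) ∈ 𝒜 := by
      intro j
      simp only [hm, Sum.elim_inl]
      exact Multiset.mem_toList.1 (La.get_mem j)
    have hmright : ∀ j : Fin Lb.length, m (Sum.inr j) ∈ ℬ := by
      intro j
      simp only [hm, Sum.elim_inr]
      exact Multiset.mem_toList.1 (Lb.get_mem j)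
    rcases huniq _ _ hadd hsa hsb with ⟨h1, h2⟩ | ⟨hABeq, h1, h2⟩
    · left
      rw [hTeq]
      have : blocksIn β T = Ta := by
        ext i
        constructor
        · intro hi
          cases i with
          | inl j => rw [hTamap]; simp
          | inr j =>
            exfalso
            have hmem : m (Sum.inr j) ∈ 𝒜 := h1 ▸ hmemmsizes _ _ hi
            exact hdisj _ hmem (hmright j)
        · intro hi
          cases i with
          | inl j =>
            rcases hdich (Sum.inl j) with h | h
            · exact h
            · exfalso
              have hmem : m (Sum.inl j) ∈ ℬ := h2 ▸ hmemmsizes _ _ h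
              exact hdisj _ (hmleft j) hmem
          | inr j => rw [hTamap] at hi; simp at hi
      rw [this, ← hS₀def]
    · right
      rw [hTeq]
      have : blocksIn β T = Tb := by
        ext i
        constructor
        · intro hi
          cases i with
          | inr j => rw [hTbmap]; simp
          | inl j =>
            exfalso
            have hmem : m (Sum.inl j) ∈ ℬ := h1 ▸ hmemmsizes _ _ hi
            exact hdisj _ (hmleft j) hmem
        · intro hi
          cases i with
          | inr j =>
            rcases hdich (Sum.inr j) with h | h
            · exact h
            · exfalso
              have hmem : m (Sum.inr j) ∈ 𝒜 := h2 ▸ hmemmsizes _ _ h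
              exact hdisj _ hmem (hmright j)
          | inl j => rw [hTbmap] at hi; simp at hi
      rw [this, ← hS₀compl]
  -- copy count is one
  have hcopy : _root_.copyCount G (completeBipartiteGraph (Fin A) (Fin B)) = 1 := by
    rw [copyCount_eq_one_iff G (Fintype.card_fin _) (by omega)]
    exact ⟨S₀, hS₀cut, hcuniq⟩
  -- edge count
  have hedgec : edgeCount Gᶜ + (La.length + Lb.length) = A + B := by
    set Dset : Set (Σ i, Fin (m i)) := {x | (x.2 : ℕ) ≠ 0} with hDset
    -- bijection between Dset and the edge set of Gᶜ
    have hbij : ∃ f : ↥Dset → ↥(Gᶜ.edgeSet), Function.Bijective f := by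
      have hadjmem : ∀ x : ↥Dset, s(e ⟨x.1.1, ⟨0, hmpos _⟩⟩, e x.1) ∈ Gᶜ.edgeSet := by
        rintro ⟨x, hx⟩
        rw [SimpleGraph.mem_edgeSet, hGc, Equiv.symm_apply_apply, Equiv.symm_apply_apply]
        exact ⟨rfl, Or.inl ⟨rfl, hx⟩⟩
      refine ⟨fun x => ⟨_, hadjmem x⟩, ?_, ?_⟩
      · rintro ⟨x, hx⟩ ⟨y, hy⟩ h
        simp only [Subtype.mk.injEq, Sym2.eq, Sym2.rel_iff', Prod.mk.injEq,
          Prod.swap_prod_mk] at h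
        rcases h with ⟨h1, h2⟩ | ⟨h1, h2⟩
        · exact Subtype.ext (e.injective h2)
        · exfalso
          have hxy : (⟨x.1, ⟨0, hmpos _⟩⟩ : Σ i, Fin (m i)) = y := e.injective h1
          apply hy
          rw [← hxy]
      · rintro ⟨ed, hed⟩
        induction ed with
        | h u v =>
          rw [SimpleGraph.mem_edgeSet, hGc] at hed
          obtain ⟨hblk, hpos⟩ := hed
          rcases hpos with ⟨h0, hn0⟩ | ⟨h0, hn0⟩
          · refine ⟨⟨e.symm v, hn0⟩, ?_⟩
            apply Subtype.ext
            simp only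
            have h2 : (⟨(e.symm v).1, ⟨0, hmpos _⟩⟩ : Σ i, Fin (m i)) = e.symm u := by
              refine Sigma.ext hblk.symm ((Fin.heq_ext_iff (congrArg m hblk.symm)).2 ?_)
              exact h0.symm
            rw [h2, e.apply_symm_apply, e.apply_symm_apply]
          · refine ⟨⟨e.symm u, hn0⟩, ?_⟩
            apply Subtype.ext
            simp only
            have h2 : (⟨(e.symm u).1, ⟨0, hmpos _⟩⟩ : Σ i, Fin (m i)) = e.symm v := by
              refine Sigma.ext hblk ((Fin.heq_ext_iff (congrArg m hblk)).2 ?_)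
              exact h0.symm
            rw [h2, e.apply_symm_apply, e.apply_symm_apply]
            rw [Sym2.eq_swap]
    obtain ⟨f, hf⟩ := hbij
    have h1 : edgeCount Gᶜ = Dset.ncard := by
      rw [edgeCount, ← Nat.card_coe_set_eq, ← Nat.card_coe_set_eq]
      exact (Nat.card_eq_of_bijective f hf).symm
    have h2 : Dsetᶜ.ncard = La.length + Lb.length := by
      rw [← Nat.card_coe_set_eq]
      have E3 : ↥(Dsetᶜ) ≃ (Fin La.length ⊕ Fin Lb.length) := by
        refine ⟨fun x => x.1.1, fun i => ⟨⟨i, ⟨0, hmpos i⟩⟩, by simp [hDset]⟩, ?_, fun i => rfl⟩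
        rintro ⟨⟨i, v⟩, hv⟩
        simp only [hDset, Set.mem_compl_iff, Set.mem_setOf_eq, not_not] at hv
        apply Subtype.ext
        exact Sigma.ext rfl (heq_of_eq (Fin.ext hv.symm))
      rw [Nat.card_congr E3, Nat.card_eq_fintype_card, Fintype.card_sum, Fintype.card_fin,
        Fintype.card_fin]
    have h3 : Dset.ncard + Dsetᶜ.ncard = A + B := by
      rw [Set.ncard_add_ncard_compl, Nat.card_eq_fintype_card, hcardW]
    omega
  have hklen : La.length + Lb.length = mup A B := by
    rw [hLa, hLb, Multiset.length_toList, Multiset.length_toList, hcardmup]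
  have hedge := edgeCount_add_compl G
  rw [Fintype.card_fin] at hedge
  have hmupn : mup A B ≤ A + B := mup_le A B
  have hchoose : A + B ≤ (A + B).choose 2 := by
    rw [Nat.choose_two_right, Nat.le_div_iff_mul_le (by norm_num)]
    exact Nat.mul_le_mul_left _ (by omega)
  exact ⟨G, hcopy, by omega⟩

/-- for positive integers `A`, `B` with `(A, B) ≠ (1, 1)` and `n = A + B`,
the maximum number of edges of a graph on `n` vertices containing exactly one subgraph
isomorphic to `K_{A,B}` equals `C(n,2) − A − B + mup(A,B)`. -/
theorem stmt13 (A B : ℕ) (hA : 1 ≤ A) (hB : 1 ≤ B) (hAB : ¬(A = 1 ∧ B = 1)) :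
    sSup {m | ∃ G : SimpleGraph (Fin (A + B)),
        _root_.copyCount G (completeBipartiteGraph (Fin A) (Fin B)) = 1 ∧ edgeCount G = m} =
      (A + B).choose 2 - A - B + mup A B := by
  apply le_antisymm
  · apply csSup_le'
    rintro s ⟨G, h1, rfl⟩
    exact upper_bound A B hA hB hAB G h1
  · obtain ⟨G, h1, h2⟩ := lower_bound A B hA hB hAB
    apply le_csSup
    · refine ⟨(A + B).choose 2, ?_⟩
      rintro s ⟨G', -, rfl⟩
      have := edgeCount_le G'
      rwa [Fintype.card_fin] at this
    · exact ⟨G, h1, h2⟩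
end

section
/- For every positive integer c there exists a constant C (depending only on c) such that for all integers n > c, |mup(n,c) − n/ν| ≤ C, where ν is the smallest positive integer that does not divide c. -/
lemma card_le_sum_of_pos {s : Multiset ℕ} (h : ∀ x ∈ s, 0 < x) :
    Multiset.card s ≤ s.sum := by
  have := Multiset.card_nsmul_le_sum (a := 1) (s := s) h
  simpa using this

lemma minNonDivisor_spec (c : ℕ) (hc : 1 ≤ c) :
    0 < minNonDivisor c ∧ ¬ minNonDivisor c ∣ c := by
  have hmem : (c + 1) ∈ {d | 0 < d ∧ ¬ d ∣ c} := by
    refine ⟨Nat.succ_pos c, fun h => ?_⟩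
    exact absurd (Nat.le_of_dvd hc h) (by omega)
  exact Nat.sInf_mem ⟨_, hmem⟩

lemma minNonDivisor_le (c : ℕ) (hc : 1 ≤ c) : minNonDivisor c ≤ c + 1 := by
  apply Nat.sInf_le
  refine ⟨Nat.succ_pos c, fun h => ?_⟩
  exact absurd (Nat.le_of_dvd hc h) (by omega)

lemma minNonDivisor_two_le (c : ℕ) (hc : 1 ≤ c) : 2 ≤ minNonDivisor c := by
  obtain ⟨h1, h2⟩ := minNonDivisor_spec c hc
  rcases Nat.lt_or_ge (minNonDivisor c) 2 with h | h
  · interval_cases h3 : (minNonDivisor c) <;> simp_all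
  · exact h

lemma dvd_of_lt_minNonDivisor (c : ℕ) {d : ℕ} (hd : 0 < d) (h : d < minNonDivisor c) :
    d ∣ c := by
  by_contra hnd
  have : minNonDivisor c ≤ d :=
    Nat.sInf_le (show d ∈ {d | 0 < d ∧ ¬ d ∣ c} from ⟨hd, hnd⟩)
  omega

lemma count_bound {n c : ℕ} (hc : 1 ≤ c) (hnc : c < n) {𝒜 ℬ : Multiset ℕ}
    (hU : UniquePartition n c 𝒜 ℬ) {a : ℕ} (hpos : 0 < a) (hdvd : a ∣ c) :
    Multiset.count a 𝒜 ≤ c := by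
  obtain ⟨hA, hB, hsA, hsB, hdisj, huniq⟩ := hU
  by_contra hcnt
  push_neg at hcnt
  set k := c / a with hk
  have hka : k * a = c := Nat.div_mul_cancel hdvd
  have hac : a ≤ c := Nat.le_of_dvd hc hdvd
  have hk1 : 1 ≤ k := (Nat.one_le_div_iff hpos).mpr hac
  have hkc : k ≤ c := by
    calc k ≤ k * a := Nat.le_mul_of_pos_right k hpos
    _ = c := hka
  have hle : Multiset.replicate k a ≤ 𝒜 :=
    Multiset.le_count_iff_replicate_le.mp (by omega)
  set ℬ' := Multiset.replicate k a with hB'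
  set 𝒜' := (𝒜 - ℬ') + ℬ with hA'
  have hsub : 𝒜 - ℬ' + ℬ' = 𝒜 := tsub_add_cancel_of_le hle
  have heq : 𝒜' + ℬ' = 𝒜 + ℬ := by
    rw [hA', add_right_comm, hsub]
  have hsB' : ℬ'.sum = c := by
    rw [hB', Multiset.sum_replicate, smul_eq_mul, hka]
  have hsubsum : (𝒜 - ℬ').sum + c = n := by
    have := congrArg Multiset.sum hsub
    rw [Multiset.sum_add, hsB'] at this
    omega
  have hsA' : 𝒜'.sum = n := by
    rw [hA', Multiset.sum_add, hsB]
    omega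
  rcases huniq 𝒜' ℬ' heq hsA' hsB' with ⟨-, h2⟩ | ⟨h3, -, -⟩
  · have haB : a ∈ ℬ := by
      rw [← h2, hB']
      exact Multiset.mem_replicate.mpr ⟨by omega, rfl⟩
    have haA : a ∈ 𝒜 := Multiset.count_pos.mp (by omega)
    exact hdisj a haA haB
  · omega

lemma card_bound {n c : ℕ} (hc : 1 ≤ c) (hnc : c < n) {𝒜 ℬ : Multiset ℕ}
    (hU : UniquePartition n c 𝒜 ℬ) :
    Multiset.card 𝒜 + Multiset.card ℬ ≤
      n / minNonDivisor c + (minNonDivisor c * c + c) := by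
  set ν := minNonDivisor c with hν
  have hν2 : 2 ≤ ν := minNonDivisor_two_le c hc
  obtain ⟨hA, hB, hsA, hsB, hdisj, -⟩ := id hU
  have hcardB : Multiset.card ℬ ≤ c := hsB ▸ card_le_sum_of_pos hB
  set small := 𝒜.filter (fun x => x < ν) with hsm
  set big := 𝒜.filter (fun x => ¬ x < ν) with hbg
  have hsplit : Multiset.card small + Multiset.card big = Multiset.card 𝒜 := by
    rw [hsm, hbg, ← Multiset.card_add, Multiset.filter_add_not]
  have hbig_sum : big.sum ≤ n := by
    obtain ⟨u, hu⟩ := Multiset.le_iff_exists_add.mp (Multiset.filter_le (fun x => ¬ x < ν) 𝒜)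
    have := congrArg Multiset.sum hu
    rw [Multiset.sum_add, hsA] at this
    rw [← hbg] at this
    omega
  have hbig : ν * Multiset.card big ≤ n := by
    have h1 : Multiset.card big • ν ≤ big.sum := by
      apply Multiset.card_nsmul_le_sum
      intro x hx
      have := (Multiset.mem_filter.mp hx).2
      omega
    rw [smul_eq_mul] at h1
    calc ν * Multiset.card big = Multiset.card big * ν := Nat.mul_comm _ _
    _ ≤ big.sum := h1
    _ ≤ n := hbig_sum
  have hcardbig : Multiset.card big ≤ n / ν := Nat.le_div_iff_mul_le (by omega) |>.mpr
    (by rw [Nat.mul_comm]; exact hbig)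
  have hcardsmall : Multiset.card small ≤ ν * c := by
    have h1 : ∑ a ∈ small.toFinset, small.count a = Multiset.card small :=
      Multiset.toFinset_sum_count_eq small
    have h2 : ∀ a ∈ small.toFinset, small.count a ≤ c := by
      intro a ha
      have hmem : a ∈ small := Multiset.mem_toFinset.mp ha
      have haA : a ∈ 𝒜 := Multiset.mem_of_mem_filter hmem
      have halt : a < ν := (Multiset.mem_filter.mp hmem).2
      have hapos : 0 < a := hA a haA
      have hdvd : a ∣ c := dvd_of_lt_minNonDivisor c hapos halt
      calc small.count a ≤ 𝒜.count a := Multiset.count_le_of_le a (Multiset.filter_le _ _)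
      _ ≤ c := count_bound hc hnc hU hapos hdvd
    have h3 : small.toFinset ⊆ Finset.range ν := by
      intro a ha
      have hmem : a ∈ small := Multiset.mem_toFinset.mp ha
      exact Finset.mem_range.mpr (Multiset.mem_filter.mp hmem).2
    calc Multiset.card small = ∑ a ∈ small.toFinset, small.count a := h1.symm
    _ ≤ ∑ a ∈ small.toFinset, c := Finset.sum_le_sum h2
    _ = small.toFinset.card * c := by rw [Finset.sum_const, smul_eq_mul]
    _ ≤ ν * c := Nat.mul_le_mul_right c (by simpa using Finset.card_le_card h3)
  omega

lemma construction {n c ν q r : ℕ} (hc : 1 ≤ c) (hν2 : 2 ≤ ν) (hνc : ¬ ν ∣ c)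
    (hrc : c < r) (hrν : ν < r) (hn : ν * q + r = n) :
    UniquePartition n c (Multiset.replicate q ν + {r}) {c} := by
  set 𝒜 := Multiset.replicate q ν + {r} with h𝒜
  have hmem𝒜 : ∀ x ∈ 𝒜, x = ν ∨ x = r := by
    intro x hx
    rw [h𝒜, Multiset.mem_add] at hx
    rcases hx with hx | hx
    · exact Or.inl (Multiset.eq_of_mem_replicate hx)
    · exact Or.inr (Multiset.mem_singleton.mp hx)
  have hνnec : ν ≠ c := fun h => hνc (h ▸ dvd_refl ν)
  refine ⟨?_, ?_, ?_, ?_, ?_, ?_⟩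
  · intro x hx; rcases hmem𝒜 x hx with h | h <;> omega
  · intro x hx; rw [Multiset.mem_singleton] at hx; omega
  · rw [h𝒜, Multiset.sum_add, Multiset.sum_replicate, Multiset.sum_singleton, smul_eq_mul,
      Nat.mul_comm]
    exact hn
  · exact Multiset.sum_singleton c
  · intro x hx hxB
    rw [Multiset.mem_singleton] at hxB
    rcases hmem𝒜 x hx with h | h <;> omega
  · intro 𝒜' ℬ' heq hsA' hsB'
    left
    have hBle : ℬ' ≤ 𝒜 + {c} := heq ▸ Multiset.le_add_left ℬ' 𝒜'
    have hmemB' : ∀ x ∈ ℬ', x = ν ∨ x = r ∨ x = c := by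
      intro x hx
      have := Multiset.mem_of_le hBle hx
      rw [Multiset.mem_add] at this
      rcases this with h | h
      · rcases hmem𝒜 x h with h | h
        · exact Or.inl h
        · exact Or.inr (Or.inl h)
      · exact Or.inr (Or.inr (Multiset.mem_singleton.mp h))
    have hcB' : c ∈ ℬ' := by
      by_contra hcB'
      have hrB' : r ∉ ℬ' := by
        intro hr
        have := Multiset.single_le_sum (fun x _ => Nat.zero_le x) r hr
        omega
      have hall : ∀ x ∈ ℬ', x = ν := by
        intro x hx
        rcases hmemB' x hx with h | h | h
        · exact h
        · exact absurd (h ▸ hx) hrB'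
        · exact absurd (h ▸ hx) hcB'
      have : ℬ' = Multiset.replicate (Multiset.card ℬ') ν :=
        Multiset.eq_replicate_card.mpr hall
      rw [this, Multiset.sum_replicate, smul_eq_mul] at hsB'
      exact hνc (Dvd.intro_left _ hsB')
    obtain ⟨ℬ'', hB''⟩ := Multiset.exists_cons_of_mem hcB'
    have hsB'' : ℬ''.sum = 0 := by
      rw [hB'', Multiset.sum_cons] at hsB'
      omega
    have hB''0 : ℬ'' = 0 := by
      by_contra h0
      obtain ⟨x, hx⟩ := Multiset.exists_mem_of_ne_zero h0
      have hx' : x ∈ ℬ' := hB'' ▸ Multiset.mem_cons_of_mem hx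
      have hx0 : x = 0 := by
        have := Multiset.sum_eq_zero_iff.mp hsB''
        exact this x hx
      rcases hmemB' x hx' with h | h | h <;> omega
    have hB'c : ℬ' = {c} := by
      rw [hB'', hB''0]
      rfl
    refine ⟨?_, hB'c⟩
    rw [hB'c] at heq
    exact add_right_cancel heq

lemma mup_set_bdd (n c : ℕ) :
    BddAbove {s | ∃ 𝒜 ℬ : Multiset ℕ, UniquePartition n c 𝒜 ℬ ∧
      s = Multiset.card 𝒜 + Multiset.card ℬ} := by
  refine ⟨n + c, ?_⟩
  rintro s ⟨𝒜, ℬ, hU, rfl⟩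
  have h1 := card_le_sum_of_pos hU.1
  have h2 := card_le_sum_of_pos hU.2.1
  have h3 := hU.2.2.1
  have h4 := hU.2.2.2.1
  omega

lemma mup_upper {n c : ℕ} (hc : 1 ≤ c) (hnc : c < n) :
    mup n c ≤ n / minNonDivisor c + (minNonDivisor c * c + c) := by
  apply csSup_le'
  rintro s ⟨𝒜, ℬ, hU, rfl⟩
  exact card_bound hc hnc hU

/-- for every positive integer `c` there is a constant `C` (depending only
on `c`) such that for all `n > c`, `|mup(n, c) − n/ν| ≤ C`, where `ν` is the smallest
positive integer not dividing `c`. -/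
theorem stmt14 (c : ℕ) (hc : 1 ≤ c) :
    ∃ C : ℝ, ∀ n : ℕ, c < n →
      |(mup n c : ℝ) - (n : ℝ) / (minNonDivisor c : ℝ)| ≤ C := by
  set ν := minNonDivisor c with hνdef
  have hν2 : 2 ≤ ν := minNonDivisor_two_le c hc
  have hνc : ¬ ν ∣ c := (minNonDivisor_spec c hc).2
  have hνle : ν ≤ c + 1 := minNonDivisor_le c hc
  refine ⟨((ν * c + 3 * c + 3 * ν + 10 : ℕ) : ℝ), fun n hn => ?_⟩
  have hνposR : (0 : ℝ) < (ν : ℝ) := by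
    have : (0:ℕ) < ν := by omega
    exact_mod_cast this
  have hν1R : (1 : ℝ) ≤ (ν : ℝ) := by
    have : (1:ℕ) ≤ ν := by omega
    exact_mod_cast this
  -- upper bound
  have hupper : (mup n c : ℝ) ≤ (n : ℝ) / (ν : ℝ) + ((ν * c + c : ℕ) : ℝ) := by
    have h1 : mup n c ≤ n / ν + (ν * c + c) := mup_upper hc hn
    have h2 : ((n / ν : ℕ) : ℝ) ≤ (n : ℝ) / (ν : ℝ) := Nat.cast_div_le
    have h3 : ((mup n c : ℕ) : ℝ) ≤ ((n / ν + (ν * c + c) : ℕ) : ℝ) := by exact_mod_cast h1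
    push_cast at h3 ⊢
    linarith
  -- lower bound
  have hlower : (n : ℝ) / (ν : ℝ) ≤ (mup n c : ℝ) + ((2 * ν + c + 1 : ℕ) : ℝ) := by
    set M := max c ν with hM
    rcases Nat.lt_or_ge n (M + ν + 1) with hsmall | hbig
    · -- n ≤ M + ν: crude bound
      have h1 : (n : ℝ) / (ν : ℝ) ≤ (n : ℝ) := div_le_self (by positivity) hν1R
      have h2 : n ≤ 2 * ν + c + 1 := by omega
      have h2R : (n : ℝ) ≤ ((2 * ν + c + 1 : ℕ) : ℝ) := by exact_mod_cast h2
      have h3 : (0 : ℝ) ≤ (mup n c : ℝ) := by positivity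
      linarith
    · set t := n - (M + 1) with ht
      set q := t / ν with hq
      set r := M + 1 + t % ν with hr
      have hdm : ν * q + t % ν = t := Nat.div_add_mod t ν
      have hqr : ν * q + r = n := by omega
      have hrc : c < r := by omega
      have hrν : ν < r := by omega
      have hrle : r ≤ c + 1 + ν := by
        have : t % ν < ν := Nat.mod_lt t (by omega)
        omega
      have hUP : UniquePartition n c (Multiset.replicate q ν + {r}) {c} :=
        construction hc hν2 hνc hrc hrν hqr
      have hmem : q + 2 ∈ {s | ∃ 𝒜 ℬ : Multiset ℕ, UniquePartition n c 𝒜 ℬ ∧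
          s = Multiset.card 𝒜 + Multiset.card ℬ} := by
        refine ⟨_, _, hUP, ?_⟩
        simp
      have hlow : q + 2 ≤ mup n c := le_csSup (mup_set_bdd n c) hmem
      have hnR : (n : ℝ) = (ν : ℝ) * (q : ℝ) + (r : ℝ) := by exact_mod_cast hqr.symm
      have hdiv : (n : ℝ) / (ν : ℝ) ≤ (q : ℝ) + (r : ℝ) := by
        rw [div_le_iff₀ hνposR]
        have hr0 : (0 : ℝ) ≤ (r : ℝ) := by positivity
        nlinarith
      have hlowR : (q : ℝ) + 2 ≤ (mup n c : ℝ) := by exact_mod_cast hlow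
      have hrleR : (r : ℝ) ≤ ((2 * ν + c + 1 : ℕ) : ℝ) := by
        have : r ≤ 2 * ν + c + 1 := by omega
        exact_mod_cast this
      linarith
  rw [abs_le]
  constructor
  · have h1 : ((2 * ν + c + 1 : ℕ) : ℝ) ≤ ((ν * c + 3 * c + 3 * ν + 10 : ℕ) : ℝ) := by
      have : 2 * ν + c + 1 ≤ ν * c + 3 * c + 3 * ν + 10 := by nlinarith
      exact_mod_cast this
    linarith
  · have h1 : ((ν * c + c : ℕ) : ℝ) ≤ ((ν * c + 3 * c + 3 * ν + 10 : ℕ) : ℝ) := by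
      have : ν * c + c ≤ ν * c + 3 * c + 3 * ν + 10 := by omega
      exact_mod_cast this
    linarith
end

section
/- Let c be a positive integer, let ν be the smallest positive integer that does not divide c, and let n > c. Then mup(n,c) ≤ (∑_{d=1}^{ν−1} c/d) + (n+c)/ν. (Note that every positive integer d < ν divides c, so each term c/d is an integer.) -/
lemma multiset_sum_mono {s t : Multiset ℕ} (h : s ≤ t) : s.sum ≤ t.sum := by
  obtain ⟨u, rfl⟩ := Multiset.le_iff_exists_add.mp h
  simp

/-- Key counting lemma: in a unique partition of `(n, c)` with `n ≠ c`, any divisor `d`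
of `c` appears (in the combined multiset) at most `c / d` times. -/
lemma count_mul_le (c n : ℕ) (hc : 1 ≤ c) (hcn : c ≤ n) (hne : n ≠ c)
    (𝒜 ℬ : Multiset ℕ) (h : UniquePartition n c 𝒜 ℬ)
    (d : ℕ) (hd : 0 < d) (hdc : d ∣ c) :
    ((𝒜 + ℬ).count d) * d ≤ c := by
  obtain ⟨h1, h2, h3, h4, h5, h6⟩ := h
  rw [Multiset.count_add]
  set k := c / d with hk
  have hkd : k * d = c := Nat.div_mul_cancel hdc
  have hk1 : 1 ≤ k := (Nat.one_le_div_iff hd).mpr (Nat.le_of_dvd hc hdc)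
  by_cases hmem : d ∈ 𝒜
  · have hB0 : ℬ.count d = 0 := Multiset.count_eq_zero.mpr (h5 d hmem)
    rw [hB0, add_zero]
    by_contra hgt
    push_neg at hgt
    have hkcount : k ≤ 𝒜.count d := by
      by_contra hh
      push_neg at hh
      have : 𝒜.count d * d ≤ k * d := Nat.mul_le_mul_right d (le_of_lt hh)
      omega
    have hrep : Multiset.replicate k d ≤ 𝒜 :=
      Multiset.le_count_iff_replicate_le.mp hkcount
    have hsum_rep : (Multiset.replicate k d).sum = c := by
      rw [Multiset.sum_replicate, smul_eq_mul, hkd]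
    have hcancel : 𝒜 - Multiset.replicate k d + Multiset.replicate k d = 𝒜 :=
      tsub_add_cancel_of_le hrep
    have hsub : (𝒜 - Multiset.replicate k d).sum = n - c := by
      have := congrArg Multiset.sum hcancel
      rw [Multiset.sum_add, hsum_rep, h3] at this
      omega
    have h6' := h6 (𝒜 - Multiset.replicate k d + ℬ) (Multiset.replicate k d)
      (by rw [add_right_comm, hcancel]) 
      (by rw [Multiset.sum_add, hsub, h4]; omega)
      hsum_rep
    rcases h6' with ⟨_, hB⟩ | ⟨heq, _, _⟩
    · have : d ∈ ℬ := by
        rw [← hB]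
        exact Multiset.mem_replicate.mpr ⟨by omega, rfl⟩
      exact h5 d hmem this
    · exact hne heq
  · have hA0 : 𝒜.count d = 0 := Multiset.count_eq_zero.mpr hmem
    rw [hA0, zero_add]
    have hrep : Multiset.replicate (ℬ.count d) d ≤ ℬ :=
      Multiset.le_count_iff_replicate_le.mp le_rfl
    have := multiset_sum_mono hrep
    rw [Multiset.sum_replicate, smul_eq_mul, h4] at this
    exact this

/-- for a positive integer `c` with smallest positive non-divisor `ν`, and
any `n > c`, `mup(n, c) ≤ (∑_{d=1}^{ν−1} c/d) + (n+c)/ν` (each `c/d` here is an integer,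
since every positive `d < ν` divides `c`). -/
theorem stmt15 (c : ℕ) (hc : 1 ≤ c) (n : ℕ) (hn : c < n) :
    (mup n c : ℝ) ≤
      (∑ d ∈ Finset.Icc 1 (minNonDivisor c - 1), (c : ℝ) / (d : ℝ)) +
        ((n : ℝ) + (c : ℝ)) / (minNonDivisor c : ℝ) := by
  set ν := minNonDivisor c with hνdef
  have hsetmem : (c + 1) ∈ {d | 0 < d ∧ ¬ d ∣ c} := by
    refine ⟨by omega, fun h => ?_⟩
    have := Nat.le_of_dvd hc h
    omega
  have hνmem : ν ∈ {d | 0 < d ∧ ¬ d ∣ c} := Nat.sInf_mem ⟨_, hsetmem⟩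
  obtain ⟨hνpos, hνndvd⟩ := hνmem
  have hν2 : 2 ≤ ν := by
    rcases Nat.lt_or_ge ν 2 with h | h
    · interval_cases ν
      · exact absurd (one_dvd c) hνndvd
    · exact h
  have hdiv : ∀ d : ℕ, 0 < d → d < ν → d ∣ c := by
    intro d hd hlt
    by_contra h
    have hmem : d ∈ {d : ℕ | 0 < d ∧ ¬ d ∣ c} := ⟨hd, h⟩
    have : ν ≤ d := Nat.sInf_le hmem
    omega
  have hνR : (0 : ℝ) < (ν : ℝ) := by positivity
  -- pointwise bound
  have key : ∀ s ∈ {s | ∃ 𝒜 ℬ : Multiset ℕ, UniquePartition n c 𝒜 ℬ ∧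
      s = Multiset.card 𝒜 + Multiset.card ℬ},
      (s : ℝ) ≤ (∑ d ∈ Finset.Icc 1 (ν - 1), (c : ℝ) / (d : ℝ)) +
        ((n : ℝ) + (c : ℝ)) / (ν : ℝ) := by
    rintro s ⟨𝒜, ℬ, hup, rfl⟩
    obtain ⟨h1, h2, h3, h4, h5, h6⟩ := hup
    set M : Multiset ℕ := 𝒜 + ℬ with hM
    have hMsum : M.sum = n + c := by rw [hM, Multiset.sum_add, h3, h4]
    have hMpos : ∀ x ∈ M, 0 < x := by
      intro x hx
      rcases Multiset.mem_add.mp hx with h | h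
      · exact h1 x h
      · exact h2 x h
    have hcard : Multiset.card 𝒜 + Multiset.card ℬ = Multiset.card M := by
      rw [hM, Multiset.card_add]
    set Msmall := M.filter (fun a => a < ν) with hMs
    set Mbig := M.filter (fun a => ¬ a < ν) with hMb
    have hsplit : Multiset.card Msmall + Multiset.card Mbig = Multiset.card M := by
      rw [hMs, hMb, ← Multiset.card_add, Multiset.filter_add_not]
    -- bound on big parts
    have hbig : Multiset.card Mbig * ν ≤ n + c := by
      have h1' : Multiset.card Mbig • ν ≤ Mbig.sum :=
        Multiset.card_nsmul_le_sum (by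
          intro x hx
          have := (Multiset.mem_filter.mp hx).2
          omega)
      have h2' : Mbig.sum ≤ M.sum := multiset_sum_mono (Multiset.filter_le _ _)
      rw [smul_eq_mul] at h1'
      omega
    -- bound on small parts
    have hsmall : Multiset.card Msmall ≤ ∑ d ∈ Finset.Icc 1 (ν - 1), c / d := by
      have hsub : Msmall.toFinset ⊆ Finset.Icc 1 (ν - 1) := by
        intro d hd
        rw [Multiset.mem_toFinset] at hd
        have hdM : d ∈ M := Multiset.mem_of_mem_filter hd
        have hdν : d < ν := (Multiset.mem_filter.mp hd).2
        have := hMpos d hdM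
        rw [Finset.mem_Icc]
        omega
      calc Multiset.card Msmall = ∑ d ∈ Msmall.toFinset, Msmall.count d :=
            (Multiset.toFinset_sum_count_eq Msmall).symm
        _ ≤ ∑ d ∈ Finset.Icc 1 (ν - 1), Msmall.count d :=
            Finset.sum_le_sum_of_subset hsub
        _ ≤ ∑ d ∈ Finset.Icc 1 (ν - 1), c / d := by
            apply Finset.sum_le_sum
            intro d hd
            rw [Finset.mem_Icc] at hd
            have hd0 : 0 < d := hd.1
            have hdlt : d < ν := by omega
            have hddvd : d ∣ c := hdiv d hd0 hdlt
            have hcount : Msmall.count d ≤ M.count d :=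
              Multiset.count_le_of_le d (Multiset.filter_le _ _)
            have hkey : M.count d * d ≤ c :=
              count_mul_le c n hc (le_of_lt hn) (by omega) 𝒜 ℬ
                ⟨h1, h2, h3, h4, h5, h6⟩ d hd0 hddvd
            have : M.count d ≤ c / d := (Nat.le_div_iff_mul_le hd0).mpr hkey
            omega
    -- assemble in ℝ
    have hsmallR : ((Multiset.card Msmall : ℕ) : ℝ) ≤
        ∑ d ∈ Finset.Icc 1 (ν - 1), (c : ℝ) / (d : ℝ) := by
      calc ((Multiset.card Msmall : ℕ) : ℝ)
          ≤ ((∑ d ∈ Finset.Icc 1 (ν - 1), c / d : ℕ) : ℝ) := by exact_mod_cast hsmall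
        _ = ∑ d ∈ Finset.Icc 1 (ν - 1), (c : ℝ) / (d : ℝ) := by
            rw [Nat.cast_sum]
            apply Finset.sum_congr rfl
            intro d hd
            rw [Finset.mem_Icc] at hd
            exact Nat.cast_div (hdiv d hd.1 (by omega)) (by
              have : (0:ℝ) < (d:ℝ) := by exact_mod_cast hd.1
              exact ne_of_gt this)
    have hbigR : ((Multiset.card Mbig : ℕ) : ℝ) ≤ ((n : ℝ) + (c : ℝ)) / (ν : ℝ) := by
      rw [le_div_iff₀ hνR]
      have : ((Multiset.card Mbig * ν : ℕ) : ℝ) ≤ ((n + c : ℕ) : ℝ) := by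
        exact_mod_cast hbig
      push_cast at this ⊢
      linarith
    have : ((Multiset.card 𝒜 + Multiset.card ℬ : ℕ) : ℝ) =
        ((Multiset.card Msmall : ℕ) : ℝ) + ((Multiset.card Mbig : ℕ) : ℝ) := by
      rw [← Nat.cast_add, hcard, ← hsplit]
    rw [this]
    exact add_le_add hsmallR hbigR
  -- conclude via sSup
  rw [mup]
  by_cases hS : Set.Nonempty {s | ∃ 𝒜 ℬ : Multiset ℕ, UniquePartition n c 𝒜 ℬ ∧
      s = Multiset.card 𝒜 + Multiset.card ℬ}
  · have hbdd : BddAbove {s | ∃ 𝒜 ℬ : Multiset ℕ, UniquePartition n c 𝒜 ℬ ∧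
        s = Multiset.card 𝒜 + Multiset.card ℬ} := by
      refine ⟨n + c, ?_⟩
      rintro s ⟨𝒜, ℬ, hup, rfl⟩
      obtain ⟨h1, h2, h3, h4, _, _⟩ := hup
      have hA : Multiset.card 𝒜 ≤ 𝒜.sum := by
        have := Multiset.card_nsmul_le_sum (s := 𝒜) (a := 1) (fun x hx => h1 x hx)
        simpa using this
      have hB : Multiset.card ℬ ≤ ℬ.sum := by
        have := Multiset.card_nsmul_le_sum (s := ℬ) (a := 1) (fun x hx => h2 x hx)
        simpa using this
      rw [h3] at hA; rw [h4] at hB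
      exact add_le_add hA hB
    exact key _ (Nat.sSup_mem hS hbdd)
  · rw [Set.not_nonempty_iff_eq_empty] at hS
    rw [hS, csSup_empty]
    have h1 : (0:ℝ) ≤ ∑ d ∈ Finset.Icc 1 (ν - 1), (c : ℝ) / (d : ℝ) := by
      apply Finset.sum_nonneg
      intro d _
      positivity
    have h2 : (0:ℝ) ≤ ((n : ℝ) + (c : ℝ)) / (ν : ℝ) := by positivity
    simpa using add_nonneg h1 h2
end

section
/- Let r ≥ 2 and let S_r denote the star with r leaves (the complete bipartite graph K_{1,r}). Let n ≥ 2r and k ≥ 0 be integers such that n(r−1) is even, k is even, and k < n. Then exa_k(n, S_r) = n(r−1)/2 + k/2; that is, every graph on n vertices containing exactly k copies of S_r has at most n(r−1)/2 + k/2 edges, and some graph on n vertices with exactly k copies of S_r attains this number of edges. -/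
open SimpleGraph

/-- The number of copies of `F` in `G`, i.e. the number of subgraphs of `G`
isomorphic to `F`. -/
noncomputable def subgraphCopyCount {V W : Type*} (G : SimpleGraph V) (F : SimpleGraph W) : ℕ :=
  Set.ncard {H : G.Subgraph | Nonempty (H.coe ≃g F)}

open Finset

set_option linter.unusedSectionVars false

section Aux

variable {V : Type*} [Fintype V] [DecidableEq V]

def starSub (G : SimpleGraph V) [DecidableRel G.Adj] (c : V) (S : Finset V) : G.Subgraph where
  verts := insert c ↑(S ∩ G.neighborFinset c)
  Adj a b := (a = c ∧ b ∈ S ∩ G.neighborFinset c) ∨ (b = c ∧ a ∈ S ∩ G.neighborFinset c)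
  adj_sub := by
    rintro a b (⟨rfl, hb⟩ | ⟨rfl, ha⟩) <;> simp only [Finset.mem_inter, mem_neighborFinset] at *
    · exact hb.2
    · exact ha.2.symm
  edge_vert := by
    rintro a b (⟨rfl, hb⟩ | ⟨rfl, ha⟩)
    · exact Set.mem_insert _ _
    · exact Set.mem_insert_iff.2 (Or.inr (by simpa using ha))
  symm := by constructor; rintro a b (h | h) <;> [exact Or.inr h; exact Or.inl h]

lemma starSub_verts (G : SimpleGraph V) [DecidableRel G.Adj] {c : V} {S : Finset V}
    (hS : S ⊆ G.neighborFinset c) : (starSub G c S).verts = insert c ↑S := by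
  simp [starSub, Finset.inter_eq_left.2 hS]

lemma starSub_adj (G : SimpleGraph V) [DecidableRel G.Adj] {c : V} {S : Finset V}
    (hS : S ⊆ G.neighborFinset c) (a b : V) :
    (starSub G c S).Adj a b ↔ ((a = c ∧ b ∈ S) ∨ (b = c ∧ a ∈ S)) := by
  simp only [starSub, Finset.inter_eq_left.2 hS]

lemma not_mem_of_subset_nbr (G : SimpleGraph V) [DecidableRel G.Adj] {c : V} {S : Finset V}
    (hS : S ⊆ G.neighborFinset c) : c ∉ S := fun h =>
  G.loopless.irrefl c ((mem_neighborFinset G c c).1 (hS h))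

lemma starSub_iso (G : SimpleGraph V) [DecidableRel G.Adj] {c : V} {S : Finset V} {r : ℕ}
    (hS : S ⊆ G.neighborFinset c) (hcard : S.card = r) :
    Nonempty ((starSub G c S).coe ≃g completeBipartiteGraph (Fin 1) (Fin r)) := by
  have hc : c ∉ S := not_mem_of_subset_nbr G hS
  have hv := starSub_verts G hS
  let eS : {x // x ∈ S} ≃ Fin r := S.equivFinOfCardEq hcard
  let f : (Fin 1 ⊕ Fin r) → ((starSub G c S).verts : Set V) := fun x =>
    Sum.rec (fun _ => ⟨c, by rw [hv]; exact Set.mem_insert _ _⟩)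
      (fun i => ⟨(eS.symm i : V), by rw [hv]; exact Set.mem_insert_of_mem _ (by simp)⟩) x
  have fval_l : ∀ i : Fin 1, (f (Sum.inl i)).val = c := fun _ => rfl
  have fval_r : ∀ i : Fin r, (f (Sum.inr i)).val = (eS.symm i : V) := fun _ => rfl
  have fmem_r : ∀ i : Fin r, (f (Sum.inr i)).val ∈ S := fun i => (eS.symm i).2
  have hne : ∀ i : Fin r, ¬((eS.symm i : V) = c) := fun i h => hc (h ▸ (eS.symm i).2)
  have hinj : Function.Injective f := by
    rintro (i | i) (j | j) h
    · exact congrArg Sum.inl (Subsingleton.elim i j)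
    · exfalso
      have h' : c = (eS.symm j : V) := by
        have h2 := congrArg Subtype.val h; simpa only [fval_l, fval_r] using h2
      rw [h'] at hc; exact hc (eS.symm j).2
    · exfalso
      have h' : (eS.symm i : V) = c := by
        have h2 := congrArg Subtype.val h; simpa only [fval_r, fval_l] using h2
      exact hne i h'
    · have h' : (eS.symm i : V) = (eS.symm j : V) := by
        have h2 := congrArg Subtype.val h; simpa only [fval_r] using h2
      have h3 : eS.symm i = eS.symm j := Subtype.ext h'
      simpa using congrArg eS h3
  have hsurj : Function.Surjective f := by
    rintro ⟨x, hx⟩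
    rw [hv] at hx
    rcases Set.mem_insert_iff.1 hx with rfl | hx
    · exact ⟨Sum.inl 0, rfl⟩
    · refine ⟨Sum.inr (eS ⟨x, by simpa using hx⟩), Subtype.ext ?_⟩
      rw [fval_r]; simp
  let e : (Fin 1 ⊕ Fin r) ≃ ((starSub G c S).verts : Set V) := Equiv.ofBijective f ⟨hinj, hsurj⟩
  have eval_l : ∀ i : Fin 1, (e (Sum.inl i)).val = c := fval_l
  have eval_r : ∀ i : Fin r, (e (Sum.inr i)).val = (eS.symm i : V) := fval_r
  refine ⟨⟨e.symm, ?_⟩⟩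
  have key : ∀ a b : Fin 1 ⊕ Fin r,
      (starSub G c S).coe.Adj (e a) (e b) ↔ (completeBipartiteGraph (Fin 1) (Fin r)).Adj a b := by
    rintro (i | i) (j | j) <;>
      simp only [Subgraph.coe_adj] <;> rw [starSub_adj G hS] <;>
      simp only [eval_l, eval_r, completeBipartiteGraph]
    · simp [hc]
    · simp [(eS.symm j).2]
    · simp [(eS.symm i).2]
    · simp [hne i, hne j]
  intro a b
  rw [← key (e.symm a) (e.symm b), e.apply_symm_apply, e.apply_symm_apply]

lemma exists_starSub (G : SimpleGraph V) [DecidableRel G.Adj] {r : ℕ}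
    {H : G.Subgraph} (e : H.coe ≃g completeBipartiteGraph (Fin 1) (Fin r)) :
    ∃ c S, S ⊆ G.neighborFinset c ∧ S.card = r ∧ H = starSub G c S := by
  classical
  set c : V := (e.symm (Sum.inl 0) : V) with hc
  have hcV : c ∈ H.verts := (e.symm (Sum.inl 0)).2
  have key1 : ∀ x : H.verts, (e x).isLeft ↔ (x : V) = c := by
    intro x
    rw [Sum.isLeft_iff]
    constructor
    · rintro ⟨i, hi⟩
      have : x = e.symm (Sum.inl 0) := by
        rw [← e.symm_apply_apply x, hi, Fin.eq_zero i]
      rw [this]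
    · intro hx
      refine ⟨0, ?_⟩
      have : x = e.symm (Sum.inl 0) := Subtype.ext hx
      rw [this, e.apply_symm_apply]
  have adjchar : ∀ a b : V, H.Adj a b ↔
      ((a = c ∧ b ∈ H.verts ∧ b ≠ c) ∨ (b = c ∧ a ∈ H.verts ∧ a ≠ c)) := by
    intro a b
    constructor
    · intro h
      have ha : a ∈ H.verts := H.edge_vert h
      have hb : b ∈ H.verts := H.edge_vert h.symm
      have h2 : H.coe.Adj ⟨a, ha⟩ ⟨b, hb⟩ := h
      have h3 := e.map_adj_iff.2 h2
      rcases h3 with ⟨h4, h5⟩ | ⟨h4, h5⟩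
      · left
        refine ⟨(key1 ⟨a, ha⟩).1 (by simp [h4]), hb, ?_⟩
        intro hbc
        have := (key1 ⟨b, hb⟩).2 hbc
        rw [Sum.isRight_iff] at h5
        obtain ⟨y, hy⟩ := h5
        rw [hy] at this; simp at this
      · right
        refine ⟨(key1 ⟨b, hb⟩).1 (by simp [h5]), ha, ?_⟩
        intro hac
        have := (key1 ⟨a, ha⟩).2 hac
        rw [Sum.isRight_iff] at h4
        obtain ⟨y, hy⟩ := h4
        rw [hy] at this; simp at this
    · rintro (⟨hac, hb, hbc⟩ | ⟨hbc2, ha, hac2⟩)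
      · have ha : a ∈ H.verts := hac ▸ hcV
        have hl : (e ⟨a, ha⟩).isLeft := (key1 ⟨a, ha⟩).2 hac
        have hrt : (e ⟨b, hb⟩).isRight := by
          rcases h' : (e ⟨b, hb⟩) with x | y
          · exact absurd ((key1 ⟨b, hb⟩).1 (by rw [h']; simp)) hbc
          · simp
        have h5 : (completeBipartiteGraph (Fin 1) (Fin r)).Adj (e ⟨a, ha⟩) (e ⟨b, hb⟩) :=
          Or.inl ⟨hl, hrt⟩
        exact e.map_adj_iff.1 h5
      · have hb : b ∈ H.verts := hbc2 ▸ hcV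
        have hl : (e ⟨b, hb⟩).isLeft := (key1 ⟨b, hb⟩).2 hbc2
        have hrt : (e ⟨a, ha⟩).isRight := by
          rcases h' : (e ⟨a, ha⟩) with x | y
          · exact absurd ((key1 ⟨a, ha⟩).1 (by rw [h']; simp)) hac2
          · simp
        have h5 : (completeBipartiteGraph (Fin 1) (Fin r)).Adj (e ⟨a, ha⟩) (e ⟨b, hb⟩) :=
          Or.inr ⟨hrt, hl⟩
        exact e.map_adj_iff.1 h5
  set S : Finset V := (Set.toFinite (H.verts \ {c})).toFinset with hSdef
  have hmemS : ∀ b, b ∈ S ↔ b ∈ H.verts ∧ b ≠ c := by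
    intro b; rw [hSdef, Set.Finite.mem_toFinset, Set.mem_diff, Set.mem_singleton_iff]
  have hSsub : S ⊆ G.neighborFinset c := by
    intro s hs
    rw [hmemS] at hs
    rw [mem_neighborFinset]
    exact H.adj_sub ((adjchar c s).2 (Or.inl ⟨rfl, hs.1, hs.2⟩))
  have hvertscard : H.verts.ncard = 1 + r := by
    rw [← Nat.card_coe_set_eq, Nat.card_congr e.toEquiv]
    simp
  have hScard : S.card = r := by
    rw [hSdef, ← Set.ncard_eq_toFinset_card _ (Set.toFinite _),
      Set.ncard_diff_singleton_of_mem hcV, hvertscard]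
    omega
  refine ⟨c, S, hSsub, hScard, ?_⟩
  apply Subgraph.ext
  · rw [starSub_verts G hSsub, hSdef, Set.Finite.coe_toFinset,
      Set.insert_diff_singleton, Set.insert_eq_self.2 hcV]
  · funext a b
    rw [eq_iff_iff, adjchar a b, starSub_adj G hSsub]
    constructor
    · rintro (⟨h1, h2, h3⟩ | ⟨h1, h2, h3⟩)
      · exact Or.inl ⟨h1, (hmemS b).2 ⟨h2, h3⟩⟩
      · exact Or.inr ⟨h1, (hmemS a).2 ⟨h2, h3⟩⟩
    · rintro (⟨h1, h2⟩ | ⟨h1, h2⟩)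
      · exact Or.inl ⟨h1, ((hmemS b).1 h2).1, ((hmemS b).1 h2).2⟩
      · exact Or.inr ⟨h1, ((hmemS a).1 h2).1, ((hmemS a).1 h2).2⟩

lemma starSub_inj (G : SimpleGraph V) [DecidableRel G.Adj] {r : ℕ} (hr : 2 ≤ r)
    {c c' : V} {S S' : Finset V} (hS : S ⊆ G.neighborFinset c) (hS' : S' ⊆ G.neighborFinset c')
    (hcard : S.card = r) (heq : starSub G c S = starSub G c' S') : c = c' ∧ S = S' := by
  have hc : c ∉ S := not_mem_of_subset_nbr G hS
  have hc' : c' ∉ S' := not_mem_of_subset_nbr G hS'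
  have hA : ∀ a b : V, ((a = c ∧ b ∈ S) ∨ (b = c ∧ a ∈ S)) ↔
      ((a = c' ∧ b ∈ S') ∨ (b = c' ∧ a ∈ S')) := by
    intro a b
    rw [← starSub_adj G hS, heq, starSub_adj G hS']
  have hcc : c = c' := by
    by_contra hne
    obtain ⟨s₁, hs₁, s₂, hs₂, hss⟩ := Finset.one_lt_card.1 (by omega : 1 < S.card)
    have h1 := (hA c s₁).1 (Or.inl ⟨rfl, hs₁⟩)
    have h2 := (hA c s₂).1 (Or.inl ⟨rfl, hs₂⟩)
    rcases h1 with ⟨h, _⟩ | ⟨h, _⟩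
    · exact hne h
    · rcases h2 with ⟨h'', _⟩ | ⟨h'', _⟩
      · exact hne h''
      · exact hss (h.trans h''.symm)
  subst hcc
  refine ⟨rfl, ?_⟩
  ext b
  constructor
  · intro hb
    rcases (hA c b).1 (Or.inl ⟨rfl, hb⟩) with ⟨_, h⟩ | ⟨h1, h2⟩
    · exact h
    · exact absurd h2 hc' 
  · intro hb
    rcases (hA c b).2 (Or.inl ⟨rfl, hb⟩) with ⟨_, h⟩ | ⟨h1, h2⟩
    · exact h
    · exact absurd h2 hc

lemma copyCount_star (G : SimpleGraph V) [DecidableRel G.Adj] {r : ℕ} (hr : 2 ≤ r) :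
    subgraphCopyCount G (completeBipartiteGraph (Fin 1) (Fin r)) = ∑ v, (G.degree v).choose r := by
  classical
  set A : Finset ((_ : V) × Finset V) :=
    Finset.univ.sigma (fun v => (G.neighborFinset v).powersetCard r) with hA
  set f : ((_ : V) × Finset V) → G.Subgraph := fun p => starSub G p.1 p.2 with hf
  have hmemA : ∀ p : ((_ : V) × Finset V), p ∈ A ↔
      (p.2 ⊆ G.neighborFinset p.1 ∧ p.2.card = r) := by
    intro p
    rw [hA, Finset.mem_sigma, Finset.mem_powersetCard]
    simp
  have hset : {H : G.Subgraph | Nonempty (H.coe ≃g completeBipartiteGraph (Fin 1) (Fin r))}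
      = ↑(A.image f) := by
    ext H
    simp only [Set.mem_setOf_eq, Finset.coe_image, Set.mem_image, Finset.mem_coe]
    constructor
    · rintro ⟨e⟩
      obtain ⟨c, S, h1, h2, rfl⟩ := exists_starSub G e
      exact ⟨⟨c, S⟩, (hmemA ⟨c, S⟩).2 ⟨h1, h2⟩, rfl⟩
    · rintro ⟨⟨c, S⟩, hp, rfl⟩
      obtain ⟨h1, h2⟩ := (hmemA ⟨c, S⟩).1 hp
      exact starSub_iso G h1 h2
  rw [subgraphCopyCount, hset, Set.ncard_coe_finset]
  rw [Finset.card_image_of_injOn (fun p hp q hq hpq => by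
    obtain ⟨h1, h2⟩ := (hmemA p).1 (by simpa using hp)
    obtain ⟨h1', h2'⟩ := (hmemA q).1 (by simpa using hq)
    obtain ⟨hcc, hSS⟩ := starSub_inj G hr h1 h1' h2 hpq
    exact Sigma.ext hcc (heq_of_eq hSS))]
  rw [hA, Finset.card_sigma]
  exact Finset.sum_congr rfl fun v _ => by
    rw [Finset.card_powersetCard, SimpleGraph.degree]

/-- The set of allowed circulant differences. -/
def Qd (n t r d : ℕ) : Prop :=
  (2 ≤ d ∧ d ≤ t + 1) ∨ (n - t - 1 ≤ d ∧ d ≤ n - 2) ∨ (r % 2 = 0 ∧ 2 * d = n)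

instance (n t r d : ℕ) : Decidable (Qd n t r d) := by unfold Qd; infer_instance

/-- Cyclic difference `a - b mod n` for `a b < n`. -/
def cdiff (n a b : ℕ) : ℕ := if b ≤ a then a - b else a + n - b

/-- The construction: a circulant graph with offsets `±{2, …, t+1}` (and `n/2` when `r`
is even), together with a perfect matching on the first `k` vertices (pairs `{2i, 2i+1}`). -/
def conG (n k t r : ℕ) : SimpleGraph (Fin n) where
  Adj i j := (i ≠ j ∧ Qd n t r (cdiff n i.val j.val)) ∨
    (i ≠ j ∧ i.val / 2 = j.val / 2 ∧ i.val < k ∧ j.val < k)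
  symm := by
    constructor
    rintro i j (⟨hne, hq⟩ | ⟨hne, h⟩)
    · refine Or.inl ⟨hne.symm, ?_⟩
      have h1 := i.isLt
      have h2 := j.isLt
      have h3 : i.val ≠ j.val := fun h => hne (Fin.ext h)
      unfold Qd cdiff at *
      split_ifs at * <;> omega
    · exact Or.inr ⟨hne.symm, h.1.symm, h.2.2, h.2.1⟩
  loopless := by constructor; rintro i (⟨hne, _⟩ | ⟨hne, _⟩) <;> exact hne rfl

instance (n k t r : ℕ) : DecidableRel (conG n k t r).Adj := fun i j =>
  inferInstanceAs (Decidable ((i ≠ j ∧ Qd n t r (cdiff n i.val j.val)) ∨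
    (i ≠ j ∧ i.val / 2 = j.val / 2 ∧ i.val < k ∧ j.val < k)))

lemma Qd_card (n t r : ℕ) (hr : 2 ≤ r) (ht : t = (r - 1) / 2) (hn : 2 * r ≤ n)
    (hpar : r % 2 = 0 → n % 2 = 0) :
    ((Finset.Ico 1 n).filter (Qd n t r)).card = r - 1 := by
  by_cases hre : r % 2 = 0
  · have hne : n % 2 = 0 := hpar hre
    have : (Finset.Ico 1 n).filter (Qd n t r)
        = (Finset.Icc 2 (t+1) ∪ Finset.Icc (n-t-1) (n-2)) ∪ {n/2} := by
      ext d
      simp only [Finset.mem_filter, Finset.mem_Ico, Finset.mem_union, Finset.mem_Icc,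
        Finset.mem_singleton, Qd]
      omega
    rw [this, Finset.card_union_of_disjoint, Finset.card_union_of_disjoint] <;>
      try (rw [Finset.disjoint_left]; intro d hd hd'; simp only [Finset.mem_union,
        Finset.mem_Icc, Finset.mem_singleton] at hd hd'; omega)
    simp only [Nat.card_Icc, Finset.card_singleton]
    omega
  · have : (Finset.Ico 1 n).filter (Qd n t r)
        = Finset.Icc 2 (t+1) ∪ Finset.Icc (n-t-1) (n-2) := by
      ext d
      simp only [Finset.mem_filter, Finset.mem_Ico, Finset.mem_union, Finset.mem_Icc, Qd]
      omega
    rw [this, Finset.card_union_of_disjoint]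
    · simp only [Nat.card_Icc]; omega
    · rw [Finset.disjoint_left]; intro d hd hd'
      simp only [Finset.mem_Icc] at hd hd'; omega

lemma conG_degree (n k t r : ℕ) (hr : 2 ≤ r) (ht : t = (r - 1) / 2) (hn : 2 * r ≤ n)
    (hpar : r % 2 = 0 → n % 2 = 0) (hk : k ≤ n) (hke : k % 2 = 0) (v : Fin n) :
    (conG n k t r).degree v = (r - 1) + (if v.val < k then 1 else 0) := by
  have hv := v.isLt
  have hn4 : 4 ≤ n := by omega
  rw [SimpleGraph.degree, neighborFinset_eq_filter]
  have hsplit : ({w | (conG n k t r).Adj v w} : Finset (Fin n)) =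
      (Finset.univ.filter (fun w : Fin n => v ≠ w ∧ Qd n t r (cdiff n v.val w.val))) ∪
      (Finset.univ.filter (fun w : Fin n =>
        v ≠ w ∧ v.val / 2 = w.val / 2 ∧ v.val < k ∧ w.val < k)) := by
    ext w
    simp only [Finset.mem_filter, Finset.mem_union, Finset.mem_univ, true_and]
    exact Iff.rfl
  rw [hsplit, Finset.card_union_of_disjoint]
  · -- compute both cards
    have hcirc : (Finset.univ.filter
        (fun w : Fin n => v ≠ w ∧ Qd n t r (cdiff n v.val w.val))).card = r - 1 := by
      rw [← Qd_card n t r hr ht hn hpar]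
      refine Finset.card_bij' (fun w _ => cdiff n v.val w.val)
        (fun d hd => ⟨if d ≤ v.val then v.val - d else v.val + n - d, by
          simp only [Finset.mem_filter, Finset.mem_Ico] at hd
          split_ifs <;> omega⟩) ?_ ?_ ?_ ?_
      · intro w hw
        simp only [Finset.mem_filter, Finset.mem_univ, true_and] at hw
        simp only [Finset.mem_filter, Finset.mem_Ico]
        have hwv := w.isLt
        have h3 : v.val ≠ w.val := fun h => hw.1 (Fin.ext h)
        refine ⟨?_, hw.2⟩
        unfold cdiff
        split_ifs <;> omega
      · intro d hd
        simp only [Finset.mem_filter, Finset.mem_Ico] at hd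
        simp only [Finset.mem_filter, Finset.mem_univ, true_and]
        have hcd : cdiff n v.val (if d ≤ v.val then v.val - d else v.val + n - d) = d := by
          unfold cdiff; split_ifs <;> omega
        constructor
        · intro h
          have := congrArg Fin.val h
          simp only at this
          split_ifs at this <;> omega
        · rw [hcd]; exact hd.2
      · intro w hw
        simp only [Finset.mem_filter, Finset.mem_univ, true_and] at hw
        have hwv := w.isLt
        have h3 : v.val ≠ w.val := fun h => hw.1 (Fin.ext h)
        apply Fin.ext
        simp only
        unfold cdiff
        split_ifs <;> omega
      · intro d hd
        simp only [Finset.mem_filter, Finset.mem_Ico] at hd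
        simp only
        unfold cdiff
        split_ifs <;> omega
    have hmatch : (Finset.univ.filter (fun w : Fin n =>
        v ≠ w ∧ v.val / 2 = w.val / 2 ∧ v.val < k ∧ w.val < k)).card
        = if v.val < k then 1 else 0 := by
      split_ifs with hvk
      · have : (Finset.univ.filter (fun w : Fin n =>
            v ≠ w ∧ v.val / 2 = w.val / 2 ∧ v.val < k ∧ w.val < k))
            = {⟨2 * (v.val / 2) + 1 - v.val % 2, by omega⟩} := by
          ext w
          simp only [Finset.mem_filter, Finset.mem_univ, true_and, Finset.mem_singleton,
            Fin.ext_iff, ne_eq]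
          omega
        rw [this, Finset.card_singleton]
      · rw [Finset.card_eq_zero, Finset.filter_eq_empty_iff]
        intro w _
        rintro ⟨_, _, h, _⟩
        exact hvk h
    rw [hcirc, hmatch]
  · rw [Finset.disjoint_left]
    intro w hw hw'
    simp only [Finset.mem_filter, Finset.mem_univ, true_and] at hw hw'
    obtain ⟨hne, hq⟩ := hw
    obtain ⟨-, hdiv, hvk, hwk⟩ := hw'
    have hwv := w.isLt
    have h3 : v.val ≠ w.val := fun h => hne (Fin.ext h)
    unfold Qd cdiff at hq
    split_ifs at hq <;> omega

lemma choose_lb (r d : ℕ) (hr : 1 ≤ r) : d ≤ r - 1 + d.choose r := by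
  induction d with
  | zero => omega
  | succ d ih =>
    rcases lt_or_ge (d + 1) r with h | h
    · omega
    · obtain ⟨r', rfl⟩ : ∃ r', r = r' + 1 := ⟨r - 1, by omega⟩
      have h2 : 0 < d.choose r' := Nat.choose_pos (by omega)
      have h3 : (d + 1).choose (r' + 1) = d.choose r' + d.choose (r' + 1) :=
        Nat.choose_succ_succ d r'
      omega

lemma card_filter_val_lt (n k : ℕ) (hk : k ≤ n) :
    ((Finset.univ : Finset (Fin n)).filter (fun v => v.val < k)).card = k := by
  have h : ((Finset.univ : Finset (Fin n)).filter (fun v => v.val < k)).card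
      = (Finset.univ : Finset (Fin k)).card := by
    refine Finset.card_bij' (fun v hv => ⟨v.val, by simpa using (Finset.mem_filter.1 hv).2⟩)
      (fun w _ => ⟨w.val, by omega⟩) ?_ ?_ ?_ ?_
    · intro v hv; exact Finset.mem_univ _
    · intro w hw
      simp only [Finset.mem_filter, Finset.mem_univ, true_and]
      exact w.isLt
    · intro v hv; apply Fin.ext; rfl
    · intro w hw; apply Fin.ext; rfl
  rw [h, Finset.card_univ, Fintype.card_fin]

lemma sum_ite_val_lt (n k : ℕ) (hk : k ≤ n) :
    (∑ v : Fin n, (if v.val < k then 1 else 0)) = k := by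
  rw [← Finset.card_filter]
  exact card_filter_val_lt n k hk

lemma edgeCount_eq {n : ℕ} (G : SimpleGraph (Fin n)) [DecidableRel G.Adj] :
    edgeCount G = G.edgeFinset.card := by
  rw [edgeCount, ← SimpleGraph.coe_edgeFinset, Set.ncard_coe_finset]

end Aux

/-- let `r ≥ 2`, and let `S_r = K_{1,r}` be the star with `r` leaves. Let
`n ≥ 2r` and `k ≥ 0` with `n(r−1)` even, `k` even and `k < n`. Then
`exa_k(n, S_r) = n(r−1)/2 + k/2`: every graph on `n` vertices with exactly `k` copies of
`S_r` has at most `n(r−1)/2 + k/2` edges, and some graph on `n` vertices with exactly `k`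
copies of `S_r` attains this number of edges. -/
theorem stmt18 (r n k : ℕ) (hr : 2 ≤ r) (hn : 2 * r ≤ n)
    (hnr : Even (n * (r - 1))) (hke : Even k) (hk : k < n) :
    (∀ G : SimpleGraph (Fin n),
      subgraphCopyCount G (completeBipartiteGraph (Fin 1) (Fin r)) = k →
        edgeCount G ≤ n * (r - 1) / 2 + k / 2) ∧
    (∃ G : SimpleGraph (Fin n),
      subgraphCopyCount G (completeBipartiteGraph (Fin 1) (Fin r)) = k ∧
        edgeCount G = n * (r - 1) / 2 + k / 2) := by
  have hnreven : n * (r - 1) % 2 = 0 := Nat.even_iff.1 hnr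
  have hkeven : k % 2 = 0 := Nat.even_iff.1 hke
  constructor
  · intro G hG
    classical
    letI : DecidableRel G.Adj := Classical.decRel _
    have hsum : ∑ v, (G.degree v).choose r = k := by
      rw [← copyCount_star G hr, hG]
    have hdeg : ∑ v, G.degree v ≤ n * (r - 1) + k := by
      calc ∑ v, G.degree v ≤ ∑ v, ((r - 1) + (G.degree v).choose r) :=
            Finset.sum_le_sum (fun v _ => choose_lb r _ (by omega))
        _ = n * (r - 1) + k := by
            rw [Finset.sum_add_distrib, hsum, Finset.sum_const, Finset.card_univ,
              Fintype.card_fin, smul_eq_mul]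
    have hhs := G.sum_degrees_eq_twice_card_edges
    have hE := edgeCount_eq G
    generalize hM : n * (r - 1) = M at *
    omega
  · have hpar : r % 2 = 0 → n % 2 = 0 := by
      intro hre
      rcases (Nat.even_mul.1 hnr) with h | h
      · exact Nat.even_iff.1 h
      · exfalso
        have : (r - 1) % 2 = 1 := by omega
        rw [Nat.even_iff, this] at h
        omega
    refine ⟨conG n k ((r - 1) / 2) r, ?_, ?_⟩ <;>
      [skip; skip] <;>
      have hdeg : ∀ v : Fin n, (conG n k ((r - 1) / 2) r).degree v
          = (r - 1) + (if v.val < k then 1 else 0) :=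
        conG_degree n k ((r - 1) / 2) r hr rfl hn hpar (le_of_lt hk) hkeven
    · rw [copyCount_star (conG n k ((r - 1) / 2) r) hr]
      calc ∑ v, ((conG n k ((r - 1) / 2) r).degree v).choose r
          = ∑ v : Fin n, (if v.val < k then 1 else 0) := by
            refine Finset.sum_congr rfl fun v _ => ?_
            rw [hdeg v]
            split_ifs with h
            · have h2 : r - 1 + 1 = r := by omega
              rw [h2, Nat.choose_self]
            · rw [Nat.add_zero, Nat.choose_eq_zero_of_lt (by omega)]
        _ = k := sum_ite_val_lt n k (le_of_lt hk)
    · have hsum : ∑ v, (conG n k ((r - 1) / 2) r).degree v = n * (r - 1) + k := by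
        calc ∑ v, (conG n k ((r - 1) / 2) r).degree v
            = ∑ v : Fin n, ((r - 1) + (if v.val < k then 1 else 0)) :=
              Finset.sum_congr rfl fun v _ => hdeg v
          _ = n * (r - 1) + k := by
              rw [Finset.sum_add_distrib, sum_ite_val_lt n k (le_of_lt hk), Finset.sum_const,
                Finset.card_univ, Fintype.card_fin, smul_eq_mul]
      have hhs := (conG n k ((r - 1) / 2) r).sum_degrees_eq_twice_card_edges
      have hE := edgeCount_eq (conG n k ((r - 1) / 2) r)
      generalize hM : n * (r - 1) = M at *
      omega
end
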